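/- arXiv:1608.03954 — 6 statements merged into one kernel-verified Lean document; each statement's English description precedes it below -/
import Mathlib

section
/- If a finite group G acts by isometries on a nonempty proper metric space X, then the quotient map X → G\X (where G\X carries the Hausdorff distance between orbits) is coarsely open. -/
open Metric Bornology Function Set

/-- A map between metric spaces is (coarsely) proper if preimages of bounded
sets are bounded. -/
def MetricallyProper {X Y : Type*} [MetricSpace X] [MetricSpace Y] (f : X → Y) : Prop :=
  ∀ B : Set Y, IsBounded B → IsBounded (f ⁻¹' B)

/-- A coarse map: proper, and uniformly bornologous. -/
def CoarseMap {X Y : Type*} [MetricSpace X] [MetricSpace Y] (f : X → Y) : Prop :=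
  MetricallyProper f ∧
    ∀ R > (0:ℝ), ∃ S > (0:ℝ), ∀ x x' : X, dist x x' ≤ R → dist (f x) (f x') ≤ S

/-- Coarsely surjective map. -/
def CoarselySurjective {X Y : Type*} [MetricSpace X] [MetricSpace Y] (f : X → Y) : Prop :=
  ∃ R > (0:ℝ), ∀ y : Y, ∃ x : X, dist y (f x) ≤ R

/-- `f` is coarsely `n`-to-1. -/
def CoarselyNTo1 {X Y : Type*} [MetricSpace X] [MetricSpace Y] (f : X → Y) (n : ℕ) : Prop :=
  ∀ R > (0:ℝ), ∃ S > (0:ℝ), ∀ A : Set Y, (∀ y ∈ A, ∀ y' ∈ A, dist y y' ≤ R) →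
    ∃ V : Fin n → Set X, (∀ i, ∀ x ∈ V i, ∀ x' ∈ V i, dist x x' ≤ S) ∧ f ⁻¹' A ⊆ ⋃ i, V i

/-- `f` is coarsely finite-to-1. -/
def CoarselyFiniteTo1 {X Y : Type*} [MetricSpace X] [MetricSpace Y] (f : X → Y) : Prop :=
  ∀ R > (0:ℝ), ∃ S > (0:ℝ), ∃ m : ℕ, ∀ A : Set Y, (∀ y ∈ A, ∀ y' ∈ A, dist y y' ≤ R) →
    ∃ V : Fin m → Set X, (∀ i, ∀ x ∈ V i, ∀ x' ∈ V i, dist x x' ≤ S) ∧ f ⁻¹' A ⊆ ⋃ i, V i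

/-- Two maps are close. -/
def Close {X Y : Type*} [MetricSpace X] [MetricSpace Y] (f g : X → Y) : Prop :=
  ∃ R > (0:ℝ), ∀ x : X, dist (f x) (g x) ≤ R

/-- `f` is a coarse equivalence. -/
def CoarseEquivalence {X Y : Type*} [MetricSpace X] [MetricSpace Y] (f : X → Y) : Prop :=
  CoarseMap f ∧ ∃ g : Y → X, CoarseMap g ∧ Close (f ∘ g) id ∧ Close (g ∘ f) id

/-- `X` and `Y` are coarsely equivalent. -/
def CoarselyEquivalent (X Y : Type*) [MetricSpace X] [MetricSpace Y] : Prop :=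
  ∃ f : X → Y, CoarseEquivalence f

/-- A family of subsets is uniformly bounded. -/
def UnifBounded {X : Type*} [MetricSpace X] (𝒰 : Set (Set X)) : Prop :=
  ∃ S : ℝ, ∀ U ∈ 𝒰, ∀ x ∈ U, ∀ y ∈ U, dist x y ≤ S

/-- A family of subsets is `R`-disjoint: distinct members lie at distance `> R`. -/
def RDisjointFam {X : Type*} [MetricSpace X] (𝒰 : Set (Set X)) (R : ℝ) : Prop :=
  ∀ U ∈ 𝒰, ∀ V ∈ 𝒰, U ≠ V → ∀ x ∈ U, ∀ y ∈ V, R < dist x y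

/-- `asdim X ≤ n`. -/
def ASDimLE (X : Type*) [MetricSpace X] (n : ℕ) : Prop :=
  ∀ R > (0:ℝ), ∃ 𝒰 : Fin (n + 1) → Set (Set X),
    (∀ i, UnifBounded (𝒰 i)) ∧ (∀ i, RDisjointFam (𝒰 i) R) ∧
      ∀ x : X, ∃ i, ∃ U ∈ 𝒰 i, x ∈ U

/-- The asymptotic dimension of `X`, valued in `ℕ∞`. -/
noncomputable def asdim (X : Type*) [MetricSpace X] : ℕ∞ :=
  sInf {n : ℕ∞ | ∃ m : ℕ, n = (m : ℕ∞) ∧ ASDimLE X m}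

/-- TI-increasing functions `[0,∞) → [0,∞)`. -/
def TIIncreasing (ρ : NNReal → NNReal) : Prop :=
  Monotone ρ ∧ Filter.Tendsto ρ Filter.atTop Filter.atTop

/-- The variable-radius neighborhood `N(A, ρ)` with respect to a basepoint `x₀`. -/
def GrowNbhd {X : Type*} [MetricSpace X] (x₀ : X) (A : Set X) (ρ : NNReal → NNReal) : Set X :=
  {x' | ∃ x ∈ A, nndist x' x ≤ ρ (nndist x x₀)}

/-- `f` is coarsely open (with respect to basepoints `x₀`, `y₀`). -/
def CoarselyOpen {X Y : Type*} [MetricSpace X] [MetricSpace Y] (f : X → Y)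
    (x₀ : X) (y₀ : Y) : Prop :=
  ∀ A : Set X, ¬ IsBounded A → ∀ ρ : NNReal → NNReal, TIIncreasing ρ →
    ∃ ρ' : NNReal → NNReal, TIIncreasing ρ' ∧
      GrowNbhd y₀ (f '' A) ρ' ⊆ f '' GrowNbhd x₀ A ρ

/-- `N(A, R)`, the closed `R`-neighborhood of `A`. -/
def NbhdR {X : Type*} [MetricSpace X] (A : Set X) (R : ℝ) : Set X :=
  {x | ∃ a ∈ A, dist x a ≤ R}

/-- A finite collection of subsets is gradually disjoint. -/
def GraduallyDisjoint {X : Type*} [MetricSpace X] {k : ℕ} (A : Fin k → Set X) : Prop :=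
  ∀ R > (0:ℝ), ∃ B : Set X, IsBounded B ∧
    ∀ i j, i ≠ j → Disjoint (NbhdR (A i) R \ B) (NbhdR (A j) R \ B)

/-- A finite collection of subsets diverges. -/
def Diverges {X : Type*} [MetricSpace X] {k : ℕ} (A : Fin k → Set X) : Prop :=
  ∀ R > (0:ℝ), IsBounded (⋂ i, NbhdR (A i) R)

/-- A countable collection of subsets is gradually disjoint: every finite
subcollection is. -/
def GraduallyDisjointSeq {X : Type*} [MetricSpace X] (A : ℕ → Set X) : Prop :=
  ∀ s : Finset ℕ, ∀ R > (0:ℝ), ∃ B : Set X, IsBounded B ∧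
    ∀ i ∈ s, ∀ j ∈ s, i ≠ j → Disjoint (NbhdR (A i) R \ B) (NbhdR (A j) R \ B)

/-- A countable collection of subsets diverges: some finite subcollection diverges. -/
def DivergesSeq {X : Type*} [MetricSpace X] (A : ℕ → Set X) : Prop :=
  ∃ s : Finset ℕ, ∀ R > (0:ℝ), IsBounded (⋂ i ∈ s, NbhdR (A i) R)

/-- A complex-valued function on a metric space is slowly oscillating. -/
def SlowlyOscillating {X : Type*} [MetricSpace X] (φ : X → ℂ) : Prop :=
  ∀ R > (0:ℝ), ∀ ε > (0:ℝ), ∃ A : Set X, IsBounded A ∧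
    ∀ x : X, ∀ p ∈ closedBall x R \ A, ∀ p' ∈ closedBall x R \ A, dist (φ p) (φ p') ≤ ε

/-!
The quotient map `q` is 1-Lipschitz, since `G` acts by isometries, and it lifts distances:
as orbits are finite, for every `a` and every orbit `Gx` some point `z ∈ Gx` realises
`d(a, z) ≤ d_H(Ga, Gx)`. For such a map, if `y` lies within `ρ'(d(q a, y₀))` of `q a`, then its
lift `z` lies within the same distance of `a`, and `d(q a, y₀) - d(q x₀, y₀) ≤ d(a, x₀)`, so
`ρ'(t) = ρ(t - d(q x₀, y₀))` works.
-/

theorem TIIncreasing.comp_tsub {ρ : NNReal → NNReal} (hρ : TIIncreasing ρ) (c : NNReal) :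
    TIIncreasing fun t => ρ (t - c) :=
  ⟨hρ.1.comp fun _ _ hst => tsub_le_tsub_right hst c,
    hρ.2.comp <| Filter.tendsto_atTop_atTop.2 fun b => ⟨b + c, fun _ => le_tsub_of_add_le_right⟩⟩

theorem coarselyOpen_of_lipschitzWith_one_of_forall_exists_lift {X Y : Type*} [MetricSpace X]
    [MetricSpace Y] {f : X → Y} (hf : LipschitzWith 1 f)
    (hlift : ∀ x y, ∃ z, f z = y ∧ nndist z x ≤ nndist y (f x)) (x₀ : X) (y₀ : Y) :
    CoarselyOpen f x₀ y₀ := by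
  intro A _ ρ hρ
  refine ⟨fun t => ρ (t - nndist (f x₀) y₀), hρ.comp_tsub _, ?_⟩
  rintro y ⟨_, ⟨a, ha, rfl⟩, hy⟩
  obtain ⟨z, rfl, hz⟩ := hlift a y
  have hbase : nndist (f a) y₀ - nndist (f x₀) y₀ ≤ nndist a x₀ := by
    rw [tsub_le_iff_right]
    calc nndist (f a) y₀ ≤ nndist (f a) (f x₀) + nndist (f x₀) y₀ := nndist_triangle _ _ _
      _ ≤ nndist a x₀ + nndist (f x₀) y₀ := by
        gcongr; simpa using hf.nndist_le a x₀
  exact ⟨z, ⟨a, ha, hz.trans (hy.trans (hρ.1 hbase))⟩, rfl⟩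

section OrbitSpace

open MulAction

variable {G X : Type*} [Group G] [MetricSpace X] [MulAction G X]

theorem hausdorffDist_orbit_le_dist [IsIsometricSMul G X] (a b : X) :
    hausdorffDist (orbit G a) (orbit G b) ≤ dist a b := by
  refine hausdorffDist_le_of_mem_dist dist_nonneg ?_ ?_ <;> rintro _ ⟨g, rfl⟩
  · exact ⟨g • b, mem_orbit b g, (dist_smul g a b).le⟩
  · exact ⟨g • a, mem_orbit a g, by rw [dist_comm, dist_smul]⟩

theorem exists_mem_orbit_dist_le_hausdorffDist [Finite G] (a b : X) :
    ∃ z ∈ orbit G b, dist a z ≤ hausdorffDist (orbit G a) (orbit G b) := by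
  have hfin : ∀ x : X, (orbit G x).Finite := fun x => Set.finite_range _
  obtain ⟨z, hz, hdist⟩ := (hfin b).isCompact.exists_infDist_eq_dist (nonempty_orbit b) a
  refine ⟨z, hz, hdist ▸ infDist_le_hausdorffDist_of_mem (mem_orbit_self a) ?_⟩
  exact hausdorffEDist_ne_top_of_nonempty_of_bounded (nonempty_orbit a) (nonempty_orbit b)
    (hfin a).isBounded (hfin b).isBounded

end OrbitSpace

theorem quotientMap_coarselyOpen_general {X : Type*} [MetricSpace X]
    (G : Type*) [Group G] [Finite G] [MulAction G X]
    (hiso : ∀ g : G, Isometry fun x : X => g • x)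
    (Q : Type*) [MetricSpace Q] (q : X → Q)
    (hsurj : Function.Surjective q)
    (hq : ∀ x y : X, q x = q y ↔ MulAction.orbit G x = MulAction.orbit G y)
    (hdist : ∀ x y : X,
      dist (q x) (q y) = hausdorffDist (MulAction.orbit G x) (MulAction.orbit G y)) :
    ∀ (x₀ : X) (y₀ : Q), CoarselyOpen q x₀ y₀ := by
  have : IsIsometricSMul G X := ⟨hiso⟩
  refine coarselyOpen_of_lipschitzWith_one_of_forall_exists_lift ?_ fun a y => ?_
  · refine LipschitzWith.of_dist_le_mul fun a b => ?_
    simpa [hdist] using hausdorffDist_orbit_le_dist (G := G) a b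
  · obtain ⟨x, rfl⟩ := hsurj y
    obtain ⟨z, hz, hza⟩ := exists_mem_orbit_dist_le_hausdorffDist (G := G) a x
    refine ⟨z, (hq z x).2 (MulAction.orbit_eq_iff.2 hz), ?_⟩
    rw [← NNReal.coe_le_coe, coe_nndist, coe_nndist, hdist, hausdorffDist_comm, dist_comm]
    exact hza

/-- If a finite group `G` acts by isometries on a nonempty
proper metric space `X`, then the quotient map `X → G\X` (to the orbit space
with the Hausdorff distance between orbits) is coarsely open. -/
theorem quotientMap_coarselyOpen {X : Type*} [MetricSpace X] [ProperSpace X] [Nonempty X]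
    (G : Type*) [Group G] [Finite G] [MulAction G X]
    (hiso : ∀ g : G, Isometry fun x : X => g • x)
    (Q : Type*) [MetricSpace Q] (q : X → Q)
    (hsurj : Function.Surjective q)
    (hq : ∀ x y : X, q x = q y ↔ MulAction.orbit G x = MulAction.orbit G y)
    (hdist : ∀ x y : X,
      dist (q x) (q y) = hausdorffDist (MulAction.orbit G x) (MulAction.orbit G y)) :
    ∀ (x₀ : X) (y₀ : Q), CoarselyOpen q x₀ y₀ :=
  quotientMap_coarselyOpen_general G hiso Q q hsurj hq hdist
end

section
/- Let D be the set of finitely supported sequences a : ℕ → {0,1} equipped with the metric d(a,b) = Σ_{i∈ℕ} |a_i − b_i|·2^i, and let ℕ carry the Euclidean metric. Then asdim(D) = 0 and asdim(ℕ) = 1; in particular the bijection f : D → ℕ, f(a) = Σ_{i∈ℕ} a_i·2^i, raises the asymptotic dimension by exactly one. -/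
open Metric Bornology Function Set

/-- The coarse Cantor set: finitely supported `{0,1}`-sequences, encoded as the
finite set of indices where the sequence equals `1`, with the metric
`d(a,b) = ∑_i |a_i - b_i| · 2^i` (the sum of `2^i` over the symmetric
difference of the supports). -/
abbrev CoarseCantor : Type := Finset ℕ

noncomputable instance : MetricSpace CoarseCantor :=
  { dist := fun A B : Finset ℕ => ∑ i ∈ symmDiff A B, (2:ℝ) ^ i
    dist_self := fun A => by
      show (∑ i ∈ symmDiff A A, (2:ℝ) ^ i) = 0
      simp [symmDiff_self]
    dist_comm := fun A B => by
      show (∑ i ∈ symmDiff A B, (2:ℝ) ^ i) = ∑ i ∈ symmDiff B A, (2:ℝ) ^ i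
      rw [symmDiff_comm]
    dist_triangle := fun A B C => by
      show (∑ i ∈ symmDiff A C, (2:ℝ) ^ i) ≤
        (∑ i ∈ symmDiff A B, (2:ℝ) ^ i) + ∑ i ∈ symmDiff B C, (2:ℝ) ^ i
      have hsub : symmDiff A C ⊆ symmDiff A B ∪ symmDiff B C := by
        simpa [Finset.sup_eq_union] using symmDiff_triangle A B C
      have h1 : ∑ i ∈ symmDiff A C, (2:ℝ) ^ i ≤
          ∑ i ∈ symmDiff A B ∪ symmDiff B C, (2:ℝ) ^ i :=
        Finset.sum_le_sum_of_subset_of_nonneg hsub (fun i _ _ => by positivity)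
      have h2 := Finset.sum_union_inter (s₁ := symmDiff A B) (s₂ := symmDiff B C)
        (f := fun i : ℕ => (2:ℝ) ^ i)
      have h3 : (0:ℝ) ≤ ∑ i ∈ symmDiff A B ∩ symmDiff B C, (2:ℝ) ^ i :=
        Finset.sum_nonneg fun i _ => by positivity
      linarith
    eq_of_dist_eq_zero := fun {A B} h => by
      have h' : (∑ i ∈ symmDiff A B, (2:ℝ) ^ i) = 0 := h
      have hempty : symmDiff A B = ∅ := by
        by_contra hne
        have hpos : 0 < ∑ i ∈ symmDiff A B, (2:ℝ) ^ i :=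
          Finset.sum_pos (fun i _ => by positivity)
            (Finset.nonempty_iff_ne_empty.mpr hne)
        exact absurd h' (ne_of_gt hpos)
      have : symmDiff A B = (⊥ : Finset ℕ) := by simpa using hempty
      exact symmDiff_eq_bot.mp this }

/-- The coarse version of the Cantor map: `a ↦ ∑ aᵢ 2^i`. -/
def cantorMap (A : CoarseCantor) : ℕ := ∑ i ∈ A, 2 ^ i

/-!
In `D`, two points whose supports agree from index `n` on are within distance `2^n`, and two
points whose supports differ at some index `≥ n` are at least `2^n` apart. So for `R < 2^n` the
classes of "agreeing from `n` on" form one uniformly bounded, `R`-disjoint cover: `asdim D = 0`.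
In `ℕ`, blocks of length `⌈R⌉` coloured by parity give two such families, whereas a single
`1`-disjoint family covering `ℕ` must put all of `ℕ` in one member, which is unbounded.
-/

open Finset in
lemma Finset.symmDiff_subset_range_iff {A B : Finset ℕ} {n : ℕ} :
    symmDiff A B ⊆ range n ↔ A \ range n = B \ range n := by
  simp only [subset_iff, Finset.ext_iff, mem_symmDiff, mem_sdiff, mem_range]
  grind

lemma dist_coarseCantor (A B : CoarseCantor) : dist A B = ∑ i ∈ symmDiff A B, (2 : ℝ) ^ i :=
  rfl

lemma dist_coarseCantor_lt_of_subset_range {A B : CoarseCantor} {n : ℕ}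
    (h : symmDiff A B ⊆ Finset.range n) : dist A B < 2 ^ n := by
  rw [dist_coarseCantor]
  exact_mod_cast Nat.geomSum_lt le_rfl fun i hi => Finset.mem_range.1 (h hi)

lemma pow_le_dist_coarseCantor {A B : CoarseCantor} {i : ℕ} (hi : i ∈ symmDiff A B) :
    (2 : ℝ) ^ i ≤ dist A B := by
  rw [dist_coarseCantor]
  exact Finset.single_le_sum (fun j _ => by positivity) hi

/-- The members of the `i`-th family are the fibres of `f` inside the colour class `c = i`. -/
lemma asdimLE_of_coloured_partition {X β : Type*} [MetricSpace X] {n : ℕ}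
    (h : ∀ R > (0 : ℝ), ∃ (f : X → β) (c : X → Fin (n + 1)) (S : ℝ),
      (∀ x y, f x = f y → dist x y ≤ S) ∧ (∀ x y, c x = c y → f x ≠ f y → R < dist x y)) :
    ASDimLE X n := by
  intro R hR
  obtain ⟨f, c, S, hbdd, hsep⟩ := h R hR
  refine ⟨fun i => range fun b => {x | f x = b ∧ c x = i}, fun i => ⟨S, ?_⟩, fun i => ?_,
    fun x => ⟨c x, _, ⟨f x, rfl⟩, rfl, rfl⟩⟩
  · rintro _ ⟨b, rfl⟩ x ⟨rfl, -⟩ y ⟨hy, -⟩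
    exact hbdd x y hy.symm
  · rintro _ ⟨b, rfl⟩ _ ⟨b', rfl⟩ hne x ⟨rfl, rfl⟩ y ⟨rfl, hy⟩
    exact hsep x y hy.symm fun hxy => hne (by rw [hxy])

lemma RDisjointFam.eq_of_dist_le {X : Type*} [MetricSpace X] {𝒰 : Set (Set X)} {R : ℝ}
    (h𝒰 : RDisjointFam 𝒰 R) {U V : Set X} (hU : U ∈ 𝒰) (hV : V ∈ 𝒰) {x y : X}
    (hx : x ∈ U) (hy : y ∈ V) (hxy : dist x y ≤ R) : U = V := by
  by_contra hne
  exact (h𝒰 U hU V hV hne x hx y hy).not_ge hxy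

lemma asdim_eq_of_asdimLE {X : Type*} [MetricSpace X] {n : ℕ} (hn : ASDimLE X n)
    (hlt : ∀ m < n, ¬ ASDimLE X m) : asdim X = n := by
  refine le_antisymm (sInf_le ⟨n, rfl, hn⟩) (le_sInf ?_)
  rintro _ ⟨m, rfl, hm⟩
  by_contra! hmn
  exact hlt m (by exact_mod_cast hmn) hm

lemma asdimLE_coarseCantor_zero : ASDimLE CoarseCantor 0 := by
  refine asdimLE_of_coloured_partition (β := CoarseCantor) fun R _ => ?_
  obtain ⟨n, hn⟩ := pow_unbounded_of_one_lt R (by norm_num : (1 : ℝ) < 2)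
  refine ⟨fun A => A \ Finset.range n, fun _ => 0, 2 ^ n, fun A B hAB => ?_, fun A B _ hAB => ?_⟩
  · exact (dist_coarseCantor_lt_of_subset_range (Finset.symmDiff_subset_range_iff.2 hAB)).le
  · obtain ⟨i, hi, hin⟩ := Finset.not_subset.1 (mt Finset.symmDiff_subset_range_iff.1 hAB)
    calc R < 2 ^ n := hn
      _ ≤ 2 ^ i := pow_le_pow_right₀ (by norm_num) (by simpa using hin)
      _ ≤ dist A B := pow_le_dist_coarseCantor hi

lemma dist_lt_of_nat_div_eq {x y L : ℕ} (hL : 0 < L) (h : x / L = y / L) :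
    dist x y < L := by
  have := Nat.div_mul_le_self x L; have := Nat.lt_div_mul_add (a := x) hL
  have := Nat.div_mul_le_self y L; have := Nat.lt_div_mul_add (a := y) hL
  rw [h] at *
  have hxy : (x : ℝ) < y + L := by exact_mod_cast (by omega : x < y + L)
  have hyx : (y : ℝ) < x + L := by exact_mod_cast (by omega : y < x + L)
  rw [Nat.dist_eq, abs_sub_lt_iff]
  constructor <;> linarith

lemma lt_dist_of_nat_div_add_two_le {x y L : ℕ} (hL : 0 < L) (h : x / L + 2 ≤ y / L) :
    (L : ℝ) < dist x y := by
  have := Nat.lt_div_mul_add (a := x) hL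
  have := (Nat.le_div_iff_mul_le hL).1 h
  have hxy : (x : ℝ) + L < y := by exact_mod_cast (by rw [add_mul] at this; omega : x + L < y)
  rw [Nat.dist_eq, abs_sub_comm]
  exact lt_abs.2 (Or.inl (by linarith))

lemma asdimLE_nat_one : ASDimLE ℕ 1 := by
  refine asdimLE_of_coloured_partition (β := ℕ) fun R hR => ?_
  have hL : 0 < ⌈R⌉₊ := Nat.ceil_pos.2 hR
  refine ⟨(· / ⌈R⌉₊), fun x => ⟨x / ⌈R⌉₊ % 2, by omega⟩, ⌈R⌉₊,
    fun x y hxy => (dist_lt_of_nat_div_eq hL hxy).le, fun x y hc hxy => ?_⟩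
  simp only [Fin.mk.injEq] at hc hxy
  refine (Nat.le_ceil R).trans_lt ?_
  rcases Nat.lt_or_gt_of_ne hxy with hlt | hlt
  · exact lt_dist_of_nat_div_add_two_le hL (by omega)
  · exact dist_comm x y ▸ lt_dist_of_nat_div_add_two_le hL (by omega)

lemma not_asdimLE_nat_zero : ¬ ASDimLE ℕ 0 := by
  intro h
  obtain ⟨𝒰, hbdd, hdisj, hcover⟩ := h 1 one_pos
  obtain ⟨S, hS⟩ := hbdd 0
  have mem (x : ℕ) : ∃ U ∈ 𝒰 0, x ∈ U := by
    obtain ⟨i, hi⟩ := hcover x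
    rwa [Fin.fin_one_eq_zero i] at hi
  obtain ⟨U, hU, h0⟩ := mem 0
  have hall (x : ℕ) : x ∈ U := by
    induction x with
    | zero => exact h0
    | succ x ih =>
      obtain ⟨V, hV, hxV⟩ := mem (x + 1)
      rwa [(hdisj 0).eq_of_dist_le hU hV ih hxV (by simp [Nat.dist_eq])]
  have hfar := hS U hU _ (hall (⌈S⌉₊ + 1)) 0 (hall 0)
  simp only [Nat.dist_eq, Nat.cast_add, Nat.cast_one, Nat.cast_zero, sub_zero] at hfar
  linarith [le_abs_self ((⌈S⌉₊ : ℝ) + 1), Nat.le_ceil S]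

lemma cantorMap_bijective : Bijective cantorMap :=
  Finset.equivBitIndices.symm.bijective

/-- The coarse Cantor set `D` has asymptotic dimension `0`,
while `ℕ` (with the Euclidean metric) has asymptotic dimension `1`; in
particular the bijection `f : D → ℕ`, `f(a) = ∑ aᵢ 2^i`, raises the asymptotic
dimension by exactly one. -/
theorem asdim_coarseCantor_and_asdim_nat :
    asdim CoarseCantor = 0 ∧ asdim ℕ = 1 ∧
      Function.Bijective cantorMap ∧ asdim ℕ = asdim CoarseCantor + 1 := by
  have hD : asdim CoarseCantor = 0 :=
    asdim_eq_of_asdimLE asdimLE_coarseCantor_zero fun m hm => absurd hm m.not_lt_zero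
  have hN : asdim ℕ = 1 := asdim_eq_of_asdimLE asdimLE_nat_one fun m hm => by
    obtain rfl : m = 0 := by omega
    exact not_asdimLE_nat_zero
  exact ⟨hD, hN, cantorMap_bijective, by rw [hD, hN]; rfl⟩
end

section
/- Let X = ⋃_{k≥1} (A_k ∪ B_{k+1}) ⊆ ℝ², where A_k = [k,∞) × {k} and B_k = {k} × [k−1,k]. Let d_e be the Euclidean metric on X and let d be the path metric on X (the distance between two points is the infimum of Euclidean lengths of continuous paths in X joining them). Then the identity map id : (X,d) → (X,d_e) satisfies d_e(p,q) ≤ d(p,q) for all p,q ∈ X (so it is coarse), and it is coarsely finite-to-1. -/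
open Metric Bornology Function Set

/-- The horizontal ray `A_k = [k,∞) × {k}`, inside `ℂ ≅ ℝ²`. -/
def Aray (k : ℕ) : Set ℂ := {z | z.im = (k:ℝ) ∧ (k:ℝ) ≤ z.re}

/-- The vertical segment `B_k = {k} × [k-1,k]`, inside `ℂ ≅ ℝ²`. -/
def Bseg (k : ℕ) : Set ℂ := {z | z.re = (k:ℝ) ∧ (k:ℝ) - 1 ≤ z.im ∧ z.im ≤ (k:ℝ)}

/-- The tree `X = ⋃_{k ≥ 1} (A_k ∪ B_{k+1}) ⊆ ℝ²`. -/
def Xtree : Set ℂ := ⋃ k ∈ {k : ℕ | 1 ≤ k}, (Aray k ∪ Bseg (k + 1))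

/-- The Euclidean length of a path in `X ⊆ ℝ² = ℂ`, i.e. its total variation. -/
noncomputable def pathLength {p q : Xtree} (γ : Path p q) : ENNReal :=
  eVariationOn (fun t => ((γ t : Xtree) : ℂ)) Set.univ

/-- The path metric on `X`: the infimum of the Euclidean lengths of continuous
paths in `X` joining two given points (`∞` if there is none). -/
noncomputable def treePathDist (p q : Xtree) : ENNReal :=
  ⨅ γ : Path p q, pathLength γ

/-- The ray `A_k`, as a subset of the tree `X` (with its Euclidean metric). -/
def ArayX (k : ℕ) : Set Xtree := Subtype.val ⁻¹' Aray k


/-! Path length dominates chord length, so `d_e ≤ d`. Conversely, each ray `A_k` and each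
segment `B_{k+1}` is a convex subset of `X`, so `d = d_e` on it. A set of Euclidean diameter
`≤ R` has imaginary parts in an interval of length `2R`, so it meets only the pieces `A_k`,
`B_{k+1}` with `k` in a window of `O(R)` integers; its preimage is covered by `O(R)` sets of
path-diameter `≤ R`. Properness is then automatic: coarsely finite-to-1 maps are proper. -/

open scoped unitInterval

theorem CoarselyFiniteTo1.metricallyProper {X Y : Type*} [MetricSpace X] [MetricSpace Y]
    {f : X → Y} (hf : CoarselyFiniteTo1 f) : MetricallyProper f := by
  intro B hB
  obtain ⟨C, hC⟩ := isBounded_iff.1 hB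
  obtain ⟨S, -, m, hm⟩ := hf (max C 1) (by positivity)
  obtain ⟨V, hVS, hBV⟩ := hm B fun y hy y' hy' => (hC hy hy').trans (le_max_left _ _)
  exact (isBounded_iUnion.2 fun i => isBounded_iff.2 ⟨S, hVS i⟩).subset hBV

theorem coarselyFiniteTo1_of_finite_cover {X Y : Type*} [MetricSpace X] [MetricSpace Y]
    {f : X → Y}
    (h : ∀ R > (0:ℝ), ∃ S > (0:ℝ), ∃ (ι : Type) (_ : Finite ι), ∀ A : Set Y,
      (∀ y ∈ A, ∀ y' ∈ A, dist y y' ≤ R) →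
        ∃ V : ι → Set X, (∀ i, ∀ x ∈ V i, ∀ x' ∈ V i, dist x x' ≤ S) ∧ f ⁻¹' A ⊆ ⋃ i, V i) :
    CoarselyFiniteTo1 f := by
  intro R hR
  obtain ⟨S, hS, ι, _, hcover⟩ := h R hR
  obtain ⟨m, ⟨φ⟩⟩ := Finite.exists_equiv_fin ι
  refine ⟨S, hS, m, fun A hA => ?_⟩
  obtain ⟨V, hVS, hAV⟩ := hcover A hA
  refine ⟨V ∘ φ.symm, fun i => hVS _, hAV.trans fun x hx => ?_⟩
  obtain ⟨i, hi⟩ := mem_iUnion.1 hx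
  exact mem_iUnion.2 ⟨φ i, by simpa using hi⟩

lemma convex_Aray (k : ℕ) : Convex ℝ (Aray k) :=
  (convex_hyperplane (.mk Complex.add_im Complex.smul_im) _).inter (convex_halfSpace_re_ge _)

lemma convex_Bseg (k : ℕ) : Convex ℝ (Bseg k) :=
  (convex_hyperplane (.mk Complex.add_re Complex.smul_re) _).inter
    ((convex_halfSpace_im_ge _).inter (convex_halfSpace_im_le _))

lemma Aray_subset_Xtree {k : ℕ} (hk : 1 ≤ k) : Aray k ⊆ Xtree :=
  fun _ hz => mem_biUnion hk (Or.inl hz)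

lemma Bseg_succ_subset_Xtree {k : ℕ} (hk : 1 ≤ k) : Bseg (k + 1) ⊆ Xtree :=
  fun _ hz => mem_biUnion hk (Or.inr hz)

lemma exists_mem_Aray_or_mem_Bseg {z : ℂ} (hz : z ∈ Xtree) :
    ∃ k : ℕ, 1 ≤ k ∧ (k : ℝ) ≤ z.im ∧ z.im ≤ k + 1 ∧ (z ∈ Aray k ∨ z ∈ Bseg (k + 1)) := by
  simp only [Xtree, mem_iUnion₂, mem_union] at hz
  obtain ⟨k, hk, h | h⟩ := hz
  · exact ⟨k, hk, h.1.ge, by linarith [h.1], Or.inl h⟩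
  · have him := h.2
    push_cast at him
    exact ⟨k, hk, by linarith, by linarith, Or.inr h⟩

lemma edist_le_treePathDist (p q : Xtree) : edist p q ≤ treePathDist p q :=
  le_iInf fun γ => by
    simpa [pathLength, Subtype.edist_eq] using
      eVariationOn.edist_le (fun t => ((γ t : Xtree) : ℂ)) (mem_univ 0) (mem_univ 1)

lemma treePathDist_le_edist {p q : Xtree} (h : segment ℝ (p : ℂ) q ⊆ Xtree) :
    treePathDist p q ≤ edist p q := by
  let γ : Path p q :=
    { toFun := fun t =>
        ⟨Path.segment (p : ℂ) q t, h (Path.range_segment (p : ℂ) q ▸ mem_range_self t)⟩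
      continuous_toFun := by fun_prop
      source' := Subtype.ext (Path.source _)
      target' := Subtype.ext (Path.target _) }
  calc treePathDist p q ≤ pathLength γ := iInf_le _ γ
    _ = eVariationOn (AffineMap.lineMap (p : ℂ) q ∘ Subtype.val) (univ : Set I) := rfl
    _ ≤ eVariationOn (AffineMap.lineMap (p : ℂ) q) (Icc 0 1) :=
        eVariationOn.comp_le_of_monotoneOn _ _ (fun _ _ _ _ h => h) (fun t _ => t.2)
    _ ≤ nndist (p : ℂ) q * eVariationOn id (Icc (0 : ℝ) 1) :=
        (lipschitzWith_lineMap _ _).lipschitzOnWith.comp_eVariationOn_le (mapsTo_univ _ _)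
    _ = edist p q := by
        rw [eVariationOn_id_Icc, sub_zero, ENNReal.ofReal_one, mul_one, Subtype.edist_eq,
          edist_nndist]

lemma dist_le_dist_of_segment_subset {T : Type*} [MetricSpace T] {e : T ≃ Xtree}
    (hd : ∀ p q : T, edist p q = treePathDist (e p) (e q)) {p q : T}
    (h : segment ℝ (e p : ℂ) (e q) ⊆ Xtree) : dist p q ≤ dist (e p) (e q) := by
  rw [← ENNReal.ofReal_le_ofReal_iff dist_nonneg, ← edist_dist, ← edist_dist, hd]
  exact treePathDist_le_edist h

lemma mem_Ico_max_one_ceil {a L : ℝ} {k : ℕ} (hk : 1 ≤ k) (ha : a ≤ k) (hL : k ≤ a + L) :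
    k ∈ Finset.Ico (max 1 ⌈a⌉₊) (max 1 ⌈a⌉₊ + (⌈L⌉₊ + 1)) := by
  have h1 : ⌈a⌉₊ ≤ k := Nat.ceil_le.2 ha
  have h2 : a ≤ ⌈a⌉₊ := Nat.le_ceil a
  have h3 : L ≤ ⌈L⌉₊ := Nat.le_ceil L
  have h4 : k < ⌈a⌉₊ + (⌈L⌉₊ + 1) := by
    exact_mod_cast (show (k : ℝ) < ((⌈a⌉₊ + (⌈L⌉₊ + 1) : ℕ) : ℝ) by push_cast; linarith)
  rw [Finset.mem_Ico]
  omega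

lemma exists_finite_cover_preimage {T : Type*} [MetricSpace T] (e : T ≃ Xtree)
    (hd : ∀ p q : T, edist p q = treePathDist (e p) (e q)) (R : ℝ) :
    ∃ (ι : Type) (_ : Finite ι), ∀ A : Set Xtree, (∀ y ∈ A, ∀ y' ∈ A, dist y y' ≤ R) →
      ∃ V : ι → Set T, (∀ i, ∀ x ∈ V i, ∀ x' ∈ V i, dist x x' ≤ R) ∧
        (fun p => e p) ⁻¹' A ⊆ ⋃ i, V i := by
  set N := ⌈2 * R + 1⌉₊ + 1
  refine ⟨Fin N ⊕ Fin N, inferInstance, fun A hA => ?_⟩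
  rcases A.eq_empty_or_nonempty with rfl | ⟨y₀, hy₀⟩
  · exact ⟨fun _ => ∅, by simp, by simp⟩
  -- `n₀ ≥ 1` keeps every piece inside `X` (`B_1` is not).
  set n₀ := max 1 ⌈(y₀ : ℂ).im - R - 1⌉₊
  let cell (S : Set ℂ) : Set T := {p | e p ∈ A ∧ (e p : ℂ) ∈ S}
  have diam_cell {S : Set ℂ} (hS : Convex ℝ S) (hSX : S ⊆ Xtree) :
      ∀ x ∈ cell S, ∀ x' ∈ cell S, dist x x' ≤ R := fun x hx x' hx' =>
    (dist_le_dist_of_segment_subset hd ((hS.segment_subset hx.2 hx'.2).trans hSX)).trans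
      (hA _ hx.1 _ hx'.1)
  refine ⟨Sum.elim (fun i => cell (Aray (n₀ + i))) (fun i => cell (Bseg (n₀ + i + 1))), ?_, ?_⟩
  · rintro (i | i)
    · exact diam_cell (convex_Aray _) (Aray_subset_Xtree (by omega))
    · exact diam_cell (convex_Bseg _) (Bseg_succ_subset_Xtree (by omega))
  · intro p hp
    obtain ⟨k, hk, hk₁, hk₂, hkAB⟩ := exists_mem_Aray_or_mem_Bseg (e p).2
    have him : |(e p : ℂ).im - (y₀ : ℂ).im| ≤ R := by
      rw [← Complex.sub_im]
      exact (Complex.abs_im_le_norm _).trans (by rw [← Complex.dist_eq]; exact hA _ hp _ hy₀)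
    have hidx := mem_Ico_max_one_ceil (a := (y₀ : ℂ).im - R - 1) (L := 2 * R + 1) hk
      (by linarith [(abs_le.1 him).1]) (by linarith [(abs_le.1 him).2])
    rw [Finset.mem_Ico] at hidx
    have hk' : n₀ + (k - n₀) = k := by omega
    rcases hkAB with hkA | hkB
    · exact mem_iUnion.2 ⟨.inl ⟨k - n₀, by omega⟩, hp, by simpa [hk'] using hkA⟩
    · exact mem_iUnion.2 ⟨.inr ⟨k - n₀, by omega⟩, hp, by simpa [hk'] using hkB⟩

/-- Let `(T, d)` be `X` equipped with its path metric (via the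
identification `e : T ≃ X`) and let `X` carry the Euclidean metric `d_e`. Then
the identity map `(X,d) → (X,d_e)` satisfies `d_e(p,q) ≤ d(p,q)` (so it is
coarse) and it is coarsely finite-to-1. -/
theorem tree_id_coarse_and_coarselyFiniteTo1 (T : Type*) [MetricSpace T]
    (e : T ≃ Xtree)
    (hd : ∀ p q : T, ENNReal.ofReal (dist p q) = treePathDist (e p) (e q)) :
    (∀ p q : T, dist (e p) (e q) ≤ dist p q) ∧
      CoarseMap (fun p : T => e p) ∧ CoarselyFiniteTo1 (fun p : T => e p) := by
  have hd' : ∀ p q : T, edist p q = treePathDist (e p) (e q) := fun p q => by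
    rw [edist_dist, hd]
  have hlip : ∀ p q : T, dist (e p) (e q) ≤ dist p q := fun p q => by
    rw [← ENNReal.ofReal_le_ofReal_iff dist_nonneg, ← edist_dist, ← edist_dist, hd']
    exact edist_le_treePathDist _ _
  have hfin : CoarselyFiniteTo1 (fun p : T => e p) :=
    coarselyFiniteTo1_of_finite_cover fun R hR => ⟨R, hR, exists_finite_cover_preimage e hd' R⟩
  exact ⟨hlip, ⟨hfin.metricallyProper, fun R hR => ⟨R, hR, fun p q h => (hlip p q).trans h⟩⟩,
    hfin⟩
end

section
/- Let X = ⋃_{k≥1} (A_k ∪ B_{k+1}) ⊆ ℝ², where A_k = [k,∞) × {k} and B_k = {k} × [k−1,k], equipped with the Euclidean metric d_e. Then (X,d_e) is coarsely equivalent to the set P = {(x,y) ∈ ℝ² : x ≥ y ≥ 0} with the Euclidean metric. -/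
open Metric Bornology Function Set

/-- One eighth of the plane: `P = {(x,y) ∈ ℝ² : x ≥ y ≥ 0}`, inside `ℂ ≅ ℝ²`. -/
def Pwedge : Set ℂ := {z | z.im ≤ z.re ∧ 0 ≤ z.im}

/-!
`X` lies inside `P`, and every point `z ∈ P` is within distance `2` of `X`: with `k = ⌊Im z⌋₊ + 1`
the point `(Re z + 1, k)` lies on the ray `A_k`, since `k ≤ Im z + 1 ≤ Re z + 1`. So the inclusion
`X ↪ P` is an isometric embedding with coarsely dense image, hence a coarse equivalence.
-/

section Isometry

variable {X Y : Type*} [MetricSpace X] [MetricSpace Y] {f : X → Y}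

theorem Isometry.metricallyProper (hf : Isometry f) : MetricallyProper f := by
  intro B hB
  obtain ⟨D, hD⟩ := isBounded_iff.mp hB
  exact isBounded_iff.mpr ⟨D, fun x hx x' hx' => (hf.dist_eq x x').symm ▸ hD hx hx'⟩

theorem Isometry.coarseMap (hf : Isometry f) : CoarseMap f :=
  ⟨hf.metricallyProper, fun R hR => ⟨R, hR, fun x x' h => (hf.dist_eq x x').le.trans h⟩⟩

theorem Isometry.coarseEquivalence_of_forall_exists_dist_le (hf : Isometry f) (C : ℝ)
    (hdense : ∀ y, ∃ x, dist (f x) y ≤ C) : CoarseEquivalence f := by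
  choose g hg using hdense
  have hg_dist (y y' : Y) : dist (g y) (g y') ≤ dist y y' + 2 * C := by
    rw [← hf.dist_eq]
    linarith [dist_triangle4 (f (g y)) y y' (f (g y')), hg y, dist_comm (f (g y')) y', hg y']
  have hg_dist' (y y' : Y) : dist y y' ≤ dist (g y) (g y') + 2 * C := by
    rw [← hf.dist_eq]
    linarith [dist_triangle4 y (f (g y)) (f (g y')) y', hg y, dist_comm (f (g y)) y, hg y']
  refine ⟨hf.coarseMap, g, ⟨?proper, ?bornologous⟩, ⟨|C| + 1, by positivity, fun y => ?_⟩,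
    ⟨|C| + 1, by positivity, fun x => ?_⟩⟩
  case proper =>
    intro B hB
    obtain ⟨D, hD⟩ := isBounded_iff.mp hB
    exact isBounded_iff.mpr ⟨D + 2 * C, fun y hy y' hy' => by linarith [hg_dist' y y', hD hy hy']⟩
  case bornologous =>
    exact fun R hR => ⟨R + 2 * |C|, by positivity, fun y y' h => by
      linarith [hg_dist y y', le_abs_self C]⟩
  · exact (hg y).trans (by linarith [le_abs_self C])
  · rw [comp_apply, id, ← hf.dist_eq]
    linarith [hg (f x), le_abs_self C]

end Isometry

theorem Xtree_subset_Pwedge : Xtree ⊆ Pwedge := by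
  intro z hz
  simp only [Xtree, mem_iUnion] at hz
  obtain ⟨k, hk, ⟨him, hre⟩ | ⟨hre, him₁, him₂⟩⟩ := hz
  · exact ⟨him ▸ hre, him ▸ k.cast_nonneg⟩
  · push_cast at hre him₁ him₂
    exact ⟨hre ▸ him₂, by linarith [k.cast_nonneg (α := ℝ)]⟩

theorem exists_mem_Xtree_dist_le_two {z : ℂ} (hz : z ∈ Pwedge) : ∃ w ∈ Xtree, dist w z ≤ 2 := by
  obtain ⟨him_le_re, him_nonneg⟩ := hz
  set k := ⌊z.im⌋₊ + 1
  have hk_le : (k : ℝ) ≤ z.im + 1 := by push_cast [k]; linarith [Nat.floor_le him_nonneg]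
  have hk_gt : z.im < k := by push_cast [k]; exact Nat.lt_floor_add_one z.im
  have hw : (⟨z.re + 1, k⟩ : ℂ) ∈ Aray k := ⟨rfl, show (k : ℝ) ≤ z.re + 1 by linarith⟩
  refine ⟨⟨z.re + 1, k⟩, mem_biUnion (Nat.le_add_left 1 _) (Or.inl hw), ?_⟩
  calc dist (⟨z.re + 1, k⟩ : ℂ) z ≤ |z.re + 1 - z.re| + |k - z.im| := by
        rw [Complex.dist_eq]
        exact (Complex.norm_le_abs_re_add_abs_im _).trans_eq (by simp)
    _ ≤ 1 + 1 := by
        gcongr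
        · simp
        · exact abs_le.mpr ⟨by linarith, by linarith⟩
    _ = 2 := by norm_num

/-- The tree `X` with the (restricted) Euclidean metric is
coarsely equivalent to the eighth-plane `P = {(x,y) : x ≥ y ≥ 0}` with the
Euclidean metric. -/
theorem tree_coarselyEquivalent_wedge : CoarselyEquivalent Xtree Pwedge := by
  refine ⟨inclusion Xtree_subset_Pwedge, ?_⟩
  refine Isometry.coarseEquivalence_of_forall_exists_dist_le (fun _ _ => rfl) 2 fun z => ?_
  obtain ⟨w, hwX, hwz⟩ := exists_mem_Xtree_dist_le_two z.2
  exact ⟨⟨w, hwX⟩, hwz⟩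
end

section
/- Let X = ⋃_{k≥1} (A_k ∪ B_{k+1}) ⊆ ℝ², where A_k = [k,∞) × {k} and B_k = {k} × [k−1,k], let d_e be the Euclidean metric on X and d the path metric on X. Then asdim(X,d) = 1 and asdim(X,d_e) = 2. -/
open Metric Bornology Function Set

/-!
In the Euclidean metric the tree is `1`-dense in the wedge `1 ≤ y ≤ x`. So `asdim ≤ 2` comes
from the plane, covered by three shifted tilings by squares, and `asdim ≥ 2` from the hex
theorem: colouring a large grid of points of the rays by the two families of a putative cover
gives a monochromatic king path across the grid, and such a path cannot leave a member.

In the path metric `X` is a tree. A point `z` is located by the arc length `spineCoord z` of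
the point where its branch leaves the staircase spine and by its depth `rayDepth z` along the
ray. Since every path leaving a ray passes through its junction with the spine, the path distance
is comparable to `rayDepth z + |spineCoord z - spineCoord w| + rayDepth w` (or to the difference
of depths on a common ray). Grouping points by `⌊spineCoord / N⌋`, `⌊rayDepth / N⌋` and their
ray, and colouring the groups by parity, gives `asdim ≤ 1`; the ray `A_1` gives `asdim ≥ 1`.
-/

section AsymptoticDimension

variable {X : Type*} [MetricSpace X]

theorem ASDimLE.mono {m n : ℕ} (h : ASDimLE X m) (hmn : m ≤ n) : ASDimLE X n := by
  intro R hR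
  obtain ⟨𝒰, hbdd, hdisj, hcov⟩ := h R hR
  refine ⟨fun i => if hi : (i : ℕ) < m + 1 then 𝒰 ⟨i, hi⟩ else ∅, fun i => ?_, fun i => ?_, ?_⟩
  · by_cases hi : (i : ℕ) < m + 1
    · simpa [hi] using hbdd ⟨i, hi⟩
    · exact ⟨0, by simp [hi]⟩
  · by_cases hi : (i : ℕ) < m + 1
    · simpa [hi] using hdisj ⟨i, hi⟩
    · simp [RDisjointFam, hi]
  · intro x
    obtain ⟨i, U, hU, hx⟩ := hcov x
    exact ⟨Fin.castLE (by omega) i, U, by simpa [Nat.lt_succ_iff.mp i.isLt] using hU, hx⟩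

theorem asdim_eq_succ {n : ℕ} (h : ASDimLE X (n + 1)) (h' : ¬ ASDimLE X n) :
    asdim X = n + 1 := by
  refine le_antisymm (sInf_le ⟨n + 1, by simp, h⟩) (le_sInf ?_)
  rintro _ ⟨k, rfl, hk⟩
  have : n < k := lt_of_not_ge fun hkn => h' (hk.mono hkn)
  exact_mod_cast this

theorem ASDimLE.of_key {n : ℕ}
    (h : ∀ R > 0, ∃ (ι : Type) (key : X → ι) (color : ι → Fin (n + 1)) (S : ℝ),
      (∀ x y, key x = key y → dist x y ≤ S) ∧
      ∀ x y, key x ≠ key y → color (key x) = color (key y) → R < dist x y) :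
    ASDimLE X n := by
  intro R hR
  obtain ⟨ι, key, color, S, hbdd, hsep⟩ := h R hR
  refine ⟨fun i => {U | ∃ k, color k = i ∧ U = key ⁻¹' {k}}, fun i => ⟨S, ?_⟩, fun i => ?_,
    fun x => ⟨color (key x), _, ⟨key x, rfl, rfl⟩, rfl⟩⟩
  · rintro _ ⟨k, -, rfl⟩ x hx y hy
    exact hbdd x y (hx.trans hy.symm)
  · rintro _ ⟨k, hk, rfl⟩ _ ⟨k', hk', rfl⟩ hne x hx y hy
    simp only [mem_preimage, mem_singleton_iff] at hx hy
    subst hx hy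
    exact hsep x y (fun h => hne (by rw [h])) (hk.trans hk'.symm)

theorem ASDimLE.of_isometry {Y : Type*} [MetricSpace Y] {f : X → Y} (hf : Isometry f) {n : ℕ}
    (h : ASDimLE Y n) : ASDimLE X n := by
  intro R hR
  obtain ⟨𝒰, hbdd, hdisj, hcov⟩ := h R hR
  refine ⟨fun i => preimage f '' 𝒰 i, fun i => ?_, fun i => ?_, fun x => ?_⟩
  · obtain ⟨S, hS⟩ := hbdd i
    refine ⟨S, ?_⟩
    rintro _ ⟨U, hU, rfl⟩ x hx y hy
    simpa [hf.dist_eq] using hS U hU _ hx _ hy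
  · rintro _ ⟨U, hU, rfl⟩ _ ⟨V, hV, rfl⟩ hne x hx y hy
    simpa [hf.dist_eq] using hdisj i U hU V hV (fun h => hne (by rw [h])) _ hx _ hy
  · obtain ⟨i, U, hU, hx⟩ := hcov (f x)
    exact ⟨i, _, ⟨U, hU, rfl⟩, hx⟩

theorem RDisjointFam.dist_le_of_chain {𝒰 : Set (Set X)} {R S : ℝ} (hsep : RDisjointFam 𝒰 R)
    (hbdd : ∀ U ∈ 𝒰, ∀ x ∈ U, ∀ y ∈ U, dist x y ≤ S) {p : ℕ → X} {M : ℕ}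
    (hstep : ∀ j < M, dist (p j) (p (j + 1)) ≤ R) (hcov : ∀ j ≤ M, ∃ U ∈ 𝒰, p j ∈ U) :
    dist (p 0) (p M) ≤ S := by
  obtain ⟨U, hU, h0⟩ := hcov 0 (Nat.zero_le M)
  have hmem : ∀ j ≤ M, p j ∈ U := by
    intro j
    induction j with
    | zero => exact fun _ => h0
    | succ j ih =>
      intro hj
      obtain ⟨V, hV, hjV⟩ := hcov (j + 1) hj
      by_contra hjU
      have hUV : U ≠ V := by rintro rfl; exact hjU hjV
      exact (hsep U hU V hV hUV _ (ih (by omega)) _ hjV).not_ge (hstep j (by omega))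
  exact hbdd U hU _ h0 _ (hmem M le_rfl)

theorem not_asdimLE_zero_of_chain {p : ℕ → X} (hstep : ∀ j, dist (p j) (p (j + 1)) ≤ 1)
    (hunbdd : ∀ C : ℝ, ∃ j, C < dist (p 0) (p j)) : ¬ ASDimLE X 0 := by
  intro h
  obtain ⟨𝒰, hbdd, hsep, hcov⟩ := h 1 one_pos
  obtain ⟨S, hS⟩ := hbdd 0
  obtain ⟨M, hM⟩ := hunbdd S
  refine hM.not_ge ((hsep 0).dist_le_of_chain hS (fun j _ => hstep j) fun j _ => ?_)
  obtain ⟨i, U, hU, hx⟩ := hcov (p j)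
  exact ⟨U, Fin.fin_one_eq_zero i ▸ hU, hx⟩

end AsymptoticDimension

section Floor

lemma abs_sub_lt_of_floor_div_eq {N : ℝ} (hN : 0 < N) {a b : ℝ} (h : ⌊a / N⌋ = ⌊b / N⌋) :
    |a - b| < N := by
  have := Int.abs_sub_lt_one_of_floor_eq_floor h
  rwa [← sub_div, abs_div, abs_of_pos hN, div_lt_one hN] at this

lemma lt_abs_sub_of_floor_div {N : ℝ} (hN : 0 < N) {a b : ℝ} (h : 2 ≤ |⌊a / N⌋ - ⌊b / N⌋|) :
    N < |a - b| := by
  have key {x y : ℝ} (hxy : ⌊x⌋ + 2 ≤ ⌊y⌋) : 1 < y - x := by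
    have : (⌊x⌋ : ℝ) + 2 ≤ ⌊y⌋ := by exact_mod_cast hxy
    linarith [Int.lt_floor_add_one x, Int.floor_le y]
  suffices 1 < |a / N - b / N| by
    rwa [← sub_div, abs_div, abs_of_pos hN, one_lt_div hN] at this
  rcases le_abs'.1 h with h | h
  · rw [abs_sub_comm]
    exact (key (by omega)).trans_le (le_abs_self _)
  · exact (key (by omega)).trans_le (le_abs_self _)

lemma le_of_floor_div_ne_zero {N : ℝ} (hN : 0 < N) {a : ℝ} (ha : 0 ≤ a) (h : ⌊a / N⌋ ≠ 0) :
    N ≤ a := by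
  have : 1 ≤ ⌊a / N⌋ := by
    have := Int.floor_nonneg.2 (div_nonneg ha hN.le)
    omega
  have : ((1 : ℤ) : ℝ) ≤ a / N := Int.le_floor.1 this
  rwa [Int.cast_one, one_le_div hN] at this

lemma lt_of_floor_div_eq_zero {N : ℝ} (hN : 0 < N) {a : ℝ} (h : ⌊a / N⌋ = 0) : a < N := by
  have := (Int.floor_eq_zero_iff.1 h).2
  rwa [div_lt_one hN] at this

end Floor

lemma Complex.dist_le_abs_re_add_abs_im (z w : ℂ) :
    dist z w ≤ |z.re - w.re| + |z.im - w.im| := by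
  simpa [Complex.dist_eq] using Complex.norm_le_abs_re_add_abs_im (z - w)

lemma Complex.abs_re_sub_le_dist (z w : ℂ) : |z.re - w.re| ≤ dist z w := by
  simpa [Complex.dist_eq] using Complex.abs_re_le_norm (z - w)

lemma Complex.abs_im_sub_le_dist (z w : ℂ) : |z.im - w.im| ≤ dist z w := by
  simpa [Complex.dist_eq] using Complex.abs_im_le_norm (z - w)

section Plane

/-- Colour `d` tiles the line by the intervals `[3i + d, 3i + d + 2]`; `stripIndex d y` is the
index `i` of the one below `y`. -/
noncomputable def stripIndex (d : ℤ) (y : ℝ) : ℤ := ⌊(y - d) / 3⌋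

/-- `y` lies in an interval of every colour `0, 1, 2` other than this one. -/
noncomputable def badColor (y : ℝ) : ℤ := (⌊y⌋ + 1) % 3

lemma stripIndex_le (d : ℤ) (y : ℝ) : 3 * stripIndex d y + d ≤ y := by
  have := Int.floor_le ((y - d) / 3)
  rw [stripIndex]
  linarith

lemma le_stripIndex_add_two_of_ne_badColor {d : ℤ} (hd0 : 0 ≤ d) (hd3 : d < 3) {y : ℝ}
    (hd : d ≠ badColor y) : y ≤ 3 * stripIndex d y + d + 2 := by
  by_contra! hy
  have hlt := Int.lt_floor_add_one ((y - d) / 3)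
  have hfloor : ⌊y⌋ = 3 * stripIndex d y + d + 2 := by
    rw [Int.floor_eq_iff]
    push_cast
    constructor <;> [linarith; (rw [stripIndex] at *; linarith)]
  apply hd
  rw [badColor, hfloor]
  omega

lemma exists_fin_three_ne (a b : ℤ) : ∃ d : Fin 3, (d : ℤ) ≠ a ∧ (d : ℤ) ≠ b := by
  by_contra! h
  have h0 := h 0
  have h1 := h 1
  have h2 := h 2
  simp only [Fin.isValue, Fin.val_zero, Fin.val_one, Fin.val_two] at h0 h1 h2
  omega

lemma abs_sub_le_of_stripIndex_eq {d : ℤ} {y y' : ℝ} (hy : y ≤ 3 * stripIndex d y + d + 2)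
    (hy' : y' ≤ 3 * stripIndex d y' + d + 2) (h : stripIndex d y = stripIndex d y') :
    |y - y'| ≤ 2 := by
  have : (stripIndex d y : ℝ) = stripIndex d y' := by exact_mod_cast h
  have := stripIndex_le d y
  have := stripIndex_le d y'
  rw [abs_le]
  constructor <;> linarith

lemma one_le_abs_sub_of_stripIndex_ne {d : ℤ} {y y' : ℝ} (hy : y ≤ 3 * stripIndex d y + d + 2)
    (hy' : y' ≤ 3 * stripIndex d y' + d + 2) (h : stripIndex d y ≠ stripIndex d y') :
    1 ≤ |y - y'| := by
  have := stripIndex_le d y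
  have := stripIndex_le d y'
  rcases lt_or_gt_of_ne h with h | h
  · have : (stripIndex d y : ℝ) + 1 ≤ stripIndex d y' := by exact_mod_cast h
    rw [abs_sub_comm]
    exact le_abs.mpr (Or.inl (by linarith))
  · have : (stripIndex d y' : ℝ) + 1 ≤ stripIndex d y := by exact_mod_cast h
    exact le_abs.mpr (Or.inl (by linarith))

/-- A colour whose intervals contain both coordinates of `z`. -/
noncomputable def tileColor (z : ℂ) : Fin 3 :=
  (exists_fin_three_ne (badColor z.re) (badColor z.im)).choose

noncomputable def tileKey (z : ℂ) : Fin 3 × ℤ × ℤ :=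
  (tileColor z, stripIndex (tileColor z) z.re, stripIndex (tileColor z) z.im)

lemma le_stripIndex_tileColor (z : ℂ) {y : ℝ} (hy : y = z.re ∨ y = z.im) :
    y ≤ 3 * stripIndex (tileColor z) y + tileColor z + 2 := by
  have h := (exists_fin_three_ne (badColor z.re) (badColor z.im)).choose_spec
  refine le_stripIndex_add_two_of_ne_badColor (by positivity) (by omega) ?_
  rcases hy with rfl | rfl
  exacts [h.1, h.2]

lemma dist_le_of_tileKey_eq {z w : ℂ} (h : tileKey z = tileKey w) : dist z w ≤ 4 := by
  simp only [tileKey, Prod.mk.injEq] at h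
  obtain ⟨hc, hre, him⟩ := h
  have hre' := abs_sub_le_of_stripIndex_eq (le_stripIndex_tileColor z (.inl rfl))
    (hc ▸ le_stripIndex_tileColor w (.inl rfl)) (hre.trans (by rw [hc]))
  have him' := abs_sub_le_of_stripIndex_eq (le_stripIndex_tileColor z (.inr rfl))
    (hc ▸ le_stripIndex_tileColor w (.inr rfl)) (him.trans (by rw [hc]))
  linarith [Complex.dist_le_abs_re_add_abs_im z w]

lemma one_le_dist_of_tileKey_ne {z w : ℂ} (hne : tileKey z ≠ tileKey w)
    (hc : (tileKey z).1 = (tileKey w).1) : 1 ≤ dist z w := by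
  simp only [tileKey] at hne hc
  have hne : stripIndex (tileColor z) z.re ≠ stripIndex (tileColor z) w.re ∨
      stripIndex (tileColor z) z.im ≠ stripIndex (tileColor z) w.im := by
    by_contra! h
    exact hne (by simp only [← hc, h])
  rcases hne with hne | hne
  · exact (one_le_abs_sub_of_stripIndex_ne (le_stripIndex_tileColor z (.inl rfl))
      (hc ▸ le_stripIndex_tileColor w (.inl rfl)) hne).trans (Complex.abs_re_sub_le_dist z w)
  · exact (one_le_abs_sub_of_stripIndex_ne (le_stripIndex_tileColor z (.inr rfl))
      (hc ▸ le_stripIndex_tileColor w (.inr rfl)) hne).trans (Complex.abs_im_sub_le_dist z w)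

theorem asdimLE_complex_two : ASDimLE ℂ 2 := by
  refine ASDimLE.of_key fun R hR => ⟨Fin 3 × ℤ × ℤ, fun z => tileKey ((2 * R)⁻¹ • z),
    Prod.fst, 4 * (2 * R), fun z w h => ?_, fun z w hne hc => ?_⟩
  · have := dist_le_of_tileKey_eq h
    rw [dist_smul₀, Real.norm_of_nonneg (by positivity)] at this
    rwa [← le_div_iff₀' (by positivity), div_inv_eq_mul] at this
  · have := one_le_dist_of_tileKey_ne hne hc
    rw [dist_smul₀, Real.norm_of_nonneg (by positivity), ← div_eq_inv_mul,
      one_le_div₀ (by positivity)] at this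
    linarith

theorem asdimLE_Xtree_two : ASDimLE Xtree 2 :=
  asdimLE_complex_two.of_isometry isometry_subtype_coe

end Plane

section TreeCoordinates

lemma mem_Xtree_iff {z : ℂ} : z ∈ Xtree ↔ ∃ k : ℕ, 1 ≤ k ∧
    ((z.im = k ∧ k ≤ z.re) ∨ (z.re = k + 1 ∧ k ≤ z.im ∧ z.im ≤ k + 1)) := by
  simp only [Xtree, Aray, Bseg, mem_iUnion, mem_union, mem_ofPred_eq, exists_prop]
  push_cast
  simp only [add_sub_cancel_right]

lemma mem_Xtree_of_ray {k : ℕ} (hk : 1 ≤ k) {z : ℂ} (him : z.im = k) (hre : k ≤ z.re) :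
    z ∈ Xtree :=
  mem_Xtree_iff.2 ⟨k, hk, .inl ⟨him, hre⟩⟩

lemma one_le_im_of_mem_Xtree {z : ℂ} (hz : z ∈ Xtree) : 1 ≤ z.im := by
  obtain ⟨k, hk, ⟨him, -⟩ | ⟨-, hkim, -⟩⟩ := mem_Xtree_iff.1 hz
  · rw [him]; exact_mod_cast hk
  · exact le_trans (by exact_mod_cast hk) hkim

lemma im_le_re_of_mem_Xtree {z : ℂ} (hz : z ∈ Xtree) : z.im ≤ z.re := by
  obtain ⟨k, -, ⟨him, hre⟩ | ⟨hre, -, him⟩⟩ := mem_Xtree_iff.1 hz <;> linarith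

def rayInt (k : ℕ) : Set ℂ := {z | z.im = k ∧ (k : ℝ) + 1 < z.re}

def junction (k : ℕ) : ℂ := ⟨k + 1, k⟩

/-- Points with `z.re ≤ z.im + 1` form the spine, the staircase through all junctions. -/
lemma spine_or_mem_rayInt {z : ℂ} (hz : z ∈ Xtree) :
    z.re ≤ z.im + 1 ∨ ∃ k : ℕ, 1 ≤ k ∧ z ∈ rayInt k := by
  by_cases h : z.re ≤ z.im + 1
  · exact .inl h
  obtain ⟨k, hk, ⟨him, -⟩ | ⟨hre, hkim, -⟩⟩ := mem_Xtree_iff.1 hz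
  · exact .inr ⟨k, hk, him, by linarith⟩
  · exact absurd (by linarith) h

/-- Arc length along the spine, from `(1, 1)`, to the point where the branch of `z` leaves it. -/
noncomputable def spineCoord (z : ℂ) : ℝ := min (z.re + z.im - 2) (2 * z.im - 1)

noncomputable def rayDepth (z : ℂ) : ℝ := max (z.re - z.im - 1) 0

lemma rayDepth_nonneg (z : ℂ) : 0 ≤ rayDepth z := le_max_right _ _

lemma not_mem_rayInt_of_spine {z : ℂ} (h : z.re ≤ z.im + 1) (k : ℕ) : z ∉ rayInt k := by
  rintro ⟨him, hre⟩
  linarith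

lemma spineCoord_of_spine {z : ℂ} (h : z.re ≤ z.im + 1) : spineCoord z = z.re + z.im - 2 :=
  min_eq_left (by linarith)

lemma rayDepth_of_spine {z : ℂ} (h : z.re ≤ z.im + 1) : rayDepth z = 0 :=
  max_eq_right (by linarith)

lemma spineCoord_of_mem_rayInt {k : ℕ} {z : ℂ} (hz : z ∈ rayInt k) : spineCoord z = 2 * k - 1 := by
  obtain ⟨him, hre⟩ := hz
  rw [spineCoord, min_eq_right (by linarith), him]

lemma rayDepth_of_mem_rayInt {k : ℕ} {z : ℂ} (hz : z ∈ rayInt k) :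
    rayDepth z = z.re - (k + 1) := by
  obtain ⟨him, hre⟩ := hz
  rw [rayDepth, max_eq_left (by linarith), him]
  ring

lemma exists_mem_rayInt_of_rayDepth_pos {z : ℂ} (hz : z ∈ Xtree) (h : 0 < rayDepth z) :
    ∃ k : ℕ, 1 ≤ k ∧ z ∈ rayInt k := by
  rcases spine_or_mem_rayInt hz with hsp | hray
  · exact absurd (rayDepth_of_spine hsp) h.ne'
  · exact hray

lemma mem_rayInt_of_mem_Xtree {k : ℕ} {z : ℂ} (hz : z ∈ Xtree) (hre : (k : ℝ) + 1 < z.re)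
    (him1 : (k : ℝ) - 1 / 2 < z.im) (him2 : z.im < k + 1 / 2) : z ∈ rayInt k := by
  obtain ⟨m, -, ⟨him, -⟩ | ⟨hre', hmim, -⟩⟩ := mem_Xtree_iff.1 hz
  · have h1 : m < k + 1 := by exact_mod_cast (show (m : ℝ) < k + 1 by linarith)
    have h2 : k < m + 1 := by exact_mod_cast (show (k : ℝ) < m + 1 by linarith)
    exact ⟨by rw [him, show m = k by omega], hre⟩
  · have : k < m := by exact_mod_cast (show (k : ℝ) < m by linarith)
    have : (k : ℝ) + 1 ≤ m := by exact_mod_cast this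
    linarith

lemma junction_mem_Xtree {k : ℕ} (hk : 1 ≤ k) : junction k ∈ Xtree :=
  mem_Xtree_of_ray hk rfl (by simp [junction])

lemma spineCoord_junction (k : ℕ) : spineCoord (junction k) = 2 * k - 1 := by
  rw [spineCoord_of_spine (by simp [junction])]
  simp [junction]
  ring

lemma dist_junction_of_mem_rayInt {k : ℕ} {z : ℂ} (hz : z ∈ rayInt k) :
    dist z (junction k) = rayDepth z := by
  rw [Complex.dist_of_im_eq (by simp [junction, hz.1]), Real.dist_eq, rayDepth_of_mem_rayInt hz,
    abs_of_pos (by simp [junction]; linarith [hz.2])]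
  simp [junction]

lemma spineCoord_nonneg {z : ℂ} (hz : z ∈ Xtree) : 0 ≤ spineCoord z := by
  have := one_le_im_of_mem_Xtree hz
  have := im_le_re_of_mem_Xtree hz
  exact le_min (by linarith) (by linarith)

lemma abs_spineCoord_sub_le (z w : ℂ) : |spineCoord z - spineCoord w| ≤ 2 * dist z w := by
  have hre := Complex.abs_re_sub_le_dist z w
  have him := Complex.abs_im_sub_le_dist z w
  refine (abs_min_sub_min_le_max _ _ _ _).trans (max_le ?_ ?_)
  · calc |z.re + z.im - 2 - (w.re + w.im - 2)| = |(z.re - w.re) + (z.im - w.im)| := by ring_nf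
      _ ≤ |z.re - w.re| + |z.im - w.im| := abs_add_le _ _
      _ ≤ 2 * dist z w := by linarith
  · calc |2 * z.im - 1 - (2 * w.im - 1)| = 2 * |z.im - w.im| := by
          rw [← abs_two, ← abs_mul]; ring_nf
      _ ≤ 2 * dist z w := by linarith

end TreeCoordinates

section SpineParam

/-- The unit-speed parametrization of the spine, starting at `(1, 1)`. -/
noncomputable def spinePt (b : ℝ) : ℂ :=
  ⟨1 + min (b - ⌊b / 2⌋) (⌊b / 2⌋ + 1), 1 + max (⌊b / 2⌋ : ℝ) (b - ⌊b / 2⌋ - 1)⟩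

lemma spinePt_re_add_im (b : ℝ) : (spinePt b).re + (spinePt b).im = b + 2 := by
  simp only [spinePt]
  rcases le_total (b - ⌊b / 2⌋) (⌊b / 2⌋ + 1) with h | h
  · rw [min_eq_left h, max_eq_left (by linarith)]; ring
  · rw [min_eq_right h, max_eq_right (by linarith)]; ring

lemma floor_half_bounds (b : ℝ) : 2 * (⌊b / 2⌋ : ℝ) ≤ b ∧ b < 2 * ⌊b / 2⌋ + 2 := by
  have h1 := Int.floor_le (b / 2)
  have h2 := Int.lt_floor_add_one (b / 2)
  constructor <;> linarith

lemma monotone_spinePt_re : Monotone fun b => (spinePt b).re := by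
  intro b b' hbb'
  have hfl : ⌊b / 2⌋ ≤ ⌊b' / 2⌋ := Int.floor_mono (by linarith)
  have hb := floor_half_bounds b
  have hb' := floor_half_bounds b'
  simp only [spinePt, add_le_add_iff_left]
  rcases hfl.eq_or_lt with heq | hlt
  · rw [heq] at hb ⊢
    exact min_le_min (by linarith) le_rfl
  · have : (⌊b / 2⌋ : ℝ) + 1 ≤ ⌊b' / 2⌋ := by exact_mod_cast hlt
    exact (min_le_right _ _).trans (le_min (by linarith) (by linarith))

lemma monotone_spinePt_im : Monotone fun b => (spinePt b).im := by
  intro b b' hbb'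
  have hfl : ⌊b / 2⌋ ≤ ⌊b' / 2⌋ := Int.floor_mono (by linarith)
  have hb := floor_half_bounds b
  have hb' := floor_half_bounds b'
  simp only [spinePt, add_le_add_iff_left]
  rcases hfl.eq_or_lt with heq | hlt
  · rw [heq] at hb ⊢
    exact max_le_max le_rfl (by linarith)
  · have : (⌊b / 2⌋ : ℝ) + 1 ≤ ⌊b' / 2⌋ := by exact_mod_cast hlt
    exact (max_le (by linarith) (by linarith)).trans (le_max_left _ _)

/-- Both coordinates increase along the spine, so the Euclidean distance is at most the
`ℓ¹` distance, which is the difference of arc lengths. -/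
lemma lipschitzWith_spinePt : LipschitzWith 1 spinePt := by
  have key {b b' : ℝ} (h : b ≤ b') : dist (spinePt b) (spinePt b') ≤ b' - b := by
    have hre := monotone_spinePt_re h
    have him := monotone_spinePt_im h
    have := spinePt_re_add_im b
    have := spinePt_re_add_im b'
    refine (Complex.dist_le_abs_re_add_abs_im _ _).trans ?_
    simp only at hre him
    rw [abs_sub_comm, abs_of_nonneg (by linarith), abs_sub_comm, abs_of_nonneg (by linarith)]
    linarith
  refine LipschitzWith.of_dist_le_mul fun b b' => ?_
  rw [NNReal.coe_one, one_mul, Real.dist_eq]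
  rcases le_total b b' with h | h
  · rw [abs_sub_comm, abs_of_nonneg (sub_nonneg.2 h)]
    exact key h
  · simpa [dist_comm, abs_of_nonneg (sub_nonneg.2 h)] using key h

lemma spinePt_mem_Xtree {b : ℝ} (hb : 0 ≤ b) : spinePt b ∈ Xtree := by
  obtain ⟨hb1, hb2⟩ := floor_half_bounds b
  have hn : 0 ≤ ⌊b / 2⌋ := Int.floor_nonneg.2 (by positivity)
  obtain ⟨n, hn⟩ := Int.eq_ofNat_of_zero_le hn
  rw [hn] at hb1 hb2
  push_cast at hb1 hb2
  rcases le_total (b - n) (n + 1) with h | h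
  · refine mem_Xtree_of_ray (k := n + 1) (by omega) ?_ ?_ <;>
      simp only [spinePt, hn, Int.cast_natCast] <;> push_cast
    · rw [max_eq_left (by linarith)]; ring
    · rw [min_eq_left h]; linarith
  · refine mem_Xtree_iff.2 ⟨n + 1, by omega, .inr ⟨?_, ?_, ?_⟩⟩ <;>
      simp only [spinePt, hn, Int.cast_natCast] <;> push_cast
    · rw [min_eq_right h]; ring
    · rw [max_eq_right (by linarith)]; linarith
    · rw [max_eq_right (by linarith)]; linarith

lemma spinePt_of_floor {b : ℝ} {n : ℤ} (h1 : 2 * (n : ℝ) ≤ b) (h2 : b < 2 * n + 2) :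
    spinePt b = ⟨1 + min (b - n) (n + 1), 1 + max (n : ℝ) (b - n - 1)⟩ := by
  have : ⌊b / 2⌋ = n := Int.floor_eq_iff.2 ⟨by linarith, by linarith⟩
  rw [spinePt, this]

lemma spinePt_spineCoord {z : ℂ} (hz : z ∈ Xtree) (hsp : z.re ≤ z.im + 1) :
    spinePt (spineCoord z) = z := by
  rw [spineCoord_of_spine hsp]
  obtain ⟨k, -, hk⟩ := mem_Xtree_iff.1 hz
  -- the top end `(k + 1, k + 1)` of a vertical segment also lies on the ray `A_(k+1)`
  have hcases : (∃ m : ℕ, z.im = m ∧ m ≤ z.re ∧ z.re ≤ m + 1) ∨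
      (z.re = k + 1 ∧ k ≤ z.im ∧ z.im < k + 1) := by
    rcases hk with ⟨him, hre⟩ | ⟨hre, hkim, him⟩
    · exact .inl ⟨k, him, hre, by linarith⟩
    · rcases him.lt_or_eq with him | him
      · exact .inr ⟨hre, hkim, him⟩
      · exact .inl ⟨k + 1, by push_cast; exact him, by push_cast; linarith, by push_cast; linarith⟩
  rcases hcases with ⟨m, him, hre1, hre2⟩ | ⟨hre, him1, him2⟩
  · rw [spinePt_of_floor (n := m - 1) (by push_cast; linarith) (by push_cast; linarith)]
    apply Complex.ext <;> push_cast
    · rw [min_eq_left (by linarith)]; linarith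
    · rw [max_eq_left (by linarith)]; linarith
  · rw [spinePt_of_floor (n := k - 1) (by push_cast; linarith) (by push_cast; linarith)]
    apply Complex.ext <;> push_cast
    · rw [min_eq_right (by linarith)]; linarith
    · rw [max_eq_right (by linarith)]; linarith

lemma spinePt_spineCoord_of_mem_rayInt {k : ℕ} (hk : 1 ≤ k) {z : ℂ} (hz : z ∈ rayInt k) :
    spinePt (spineCoord z) = junction k := by
  rw [spineCoord_of_mem_rayInt hz, ← spineCoord_junction,
    spinePt_spineCoord (junction_mem_Xtree hk) (by simp [junction])]

end SpineParam

section PathLength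

lemma treePathDist_le_of_lipschitzWith {f : ℝ → ℂ} {K : NNReal} (hf : LipschitzWith K f)
    (hmem : ∀ t ∈ Icc (0 : ℝ) 1, f t ∈ Xtree) {p q : Xtree} (hp : f 0 = p) (hq : f 1 = q) :
    treePathDist p q ≤ K := by
  let γ : Path p q :=
    { toFun := fun t => ⟨f t, hmem t t.2⟩
      continuous_toFun := (hf.continuous.comp continuous_subtype_val).subtype_mk _
      source' := Subtype.ext hp
      target' := Subtype.ext hq }
  refine (iInf_le _ γ).trans ?_
  calc pathLength γ = eVariationOn (f ∘ Subtype.val) (univ : Set unitInterval) := rfl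
    _ ≤ K * eVariationOn (Subtype.val : unitInterval → ℝ) univ :=
      hf.lipschitzOnWith.comp_eVariationOn_le (mapsTo_univ _ _)
    _ = K := by
      have hmono : Monotone (Subtype.val : unitInterval → ℝ) := fun _ _ h => h
      have := (hmono.monotoneOn univ).eVariationOn_eq (mem_univ 0) (mem_univ 1)
      simp only [univ_inter] at this
      rw [show Icc (0 : unitInterval) 1 = univ from Icc_bot_top] at this
      simp [this]

lemma ofReal_dist_le_treePathDist (p q : Xtree) :
    ENNReal.ofReal (dist (p : ℂ) q) ≤ treePathDist p q :=
  le_iInf fun γ => by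
    have := eVariationOn.edist_le (fun t => (γ t : ℂ)) (mem_univ 0) (mem_univ 1)
    simp only [Path.source, Path.target] at this
    rwa [← edist_dist]

lemma ofReal_dist_add_dist_le_treePathDist {p q : Xtree} {w : ℂ}
    (h : ∀ γ : Path p q, ∃ t, (γ t : ℂ) = w) :
    ENNReal.ofReal (dist (p : ℂ) w + dist w q) ≤ treePathDist p q := by
  refine le_iInf fun γ => ?_
  obtain ⟨t, ht⟩ := h γ
  let f := fun s => (γ s : ℂ)
  calc ENNReal.ofReal (dist (p : ℂ) w + dist w q) = edist (f 0) (f t) + edist (f t) (f 1) := by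
        simp [f, ht, ENNReal.ofReal_add, edist_dist]
    _ ≤ eVariationOn f (Iic t) + eVariationOn f (Ici t) :=
      add_le_add (eVariationOn.edist_le f (by simp) (by simp))
        (eVariationOn.edist_le f (by simp) unitInterval.le_one')
    _ ≤ eVariationOn f (Iic t ∪ Ici t) :=
      eVariationOn.add_le_union f fun x hx y hy => le_trans hx hy
    _ ≤ pathLength γ := eVariationOn.mono f (subset_univ _)

lemma exists_eq_junction_of_path {k : ℕ} {p q : Xtree} (hp : (p : ℂ) ∈ rayInt k)
    (hq : (q : ℂ) ∉ rayInt k) (γ : Path p q) : ∃ t, (γ t : ℂ) = junction k := by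
  by_contra! hγ
  let U : Set ℂ := {z | (k : ℝ) + 1 < z.re ∧ (k : ℝ) - 1 / 2 < z.im ∧ z.im < k + 1 / 2}
  let V : Set ℂ := {z | z.re < k + 1 ∨ z.im ≠ k}
  have hU : IsOpen U := (isOpen_lt continuous_const Complex.continuous_re).inter
    ((isOpen_lt continuous_const Complex.continuous_im).inter
      (isOpen_lt Complex.continuous_im continuous_const))
  have hV : IsOpen V := (isOpen_lt Complex.continuous_re continuous_const).union
    (isOpen_ne_fun Complex.continuous_im continuous_const)
  have hXU {z : ℂ} (hz : z ∈ Xtree) (hzU : z ∈ U) : z ∈ rayInt k :=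
    mem_rayInt_of_mem_Xtree hz hzU.1 hzU.2.1 hzU.2.2
  have hrange : IsPreconnected (range fun t => (γ t : ℂ)) :=
    isPreconnected_range (continuous_subtype_val.comp γ.continuous)
  have hcover : (range fun t => (γ t : ℂ)) ⊆ U ∪ V := by
    rintro _ ⟨t, rfl⟩
    by_cases hV' : (γ t : ℂ) ∈ V
    · exact .inr hV'
    · simp only [V, mem_ofPred_eq, not_or, not_lt, not_not] at hV'
      have hre : (k : ℝ) + 1 < (γ t : ℂ).re := hV'.1.lt_of_ne fun h =>
        hγ t (Complex.ext (by simp [junction, h]) (by simp [junction, hV'.2]))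
      exact .inl ⟨hre, by linarith [hV'.2], by linarith [hV'.2]⟩
  have hdisj : (range fun t => (γ t : ℂ)) ∩ (U ∩ V) = ∅ := by
    ext z
    simp only [mem_inter_iff, mem_range, mem_empty_iff_false, iff_false, not_and]
    rintro ⟨t, rfl⟩ hzU hzV
    obtain ⟨him, hre⟩ := hXU (γ t).2 hzU
    rcases hzV with h' | h' <;> [linarith; exact h' him]
  rcases isPreconnected_iff_subset_of_disjoint.1 hrange U V hU hV hcover hdisj with h | h
  · exact hq (hXU q.2 (by simpa using h ⟨1, rfl⟩))
  · have : (p : ℂ) ∈ V := by simpa using h ⟨0, rfl⟩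
    obtain ⟨him, hre⟩ := hp
    rcases this with h' | h' <;> [linarith; exact h' him]

end PathLength

noncomputable def spineFoot {T : Type*} (e : T ≃ Xtree) (p : T) : T :=
  e.symm ⟨spinePt (spineCoord (e p)), spinePt_mem_Xtree (spineCoord_nonneg (e p).2)⟩

lemma coe_spineFoot {T : Type*} {e : T ≃ Xtree} (p : T) :
    (e (spineFoot e p) : ℂ) = spinePt (spineCoord (e p)) := by
  simp [spineFoot]

def RealizesPathMetric {T : Type*} [MetricSpace T] (e : T ≃ Xtree) : Prop :=
  ∀ p q : T, ENNReal.ofReal (dist p q) = treePathDist (e p) (e q)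

namespace RealizesPathMetric

variable {T : Type*} [MetricSpace T] {e : T ≃ Xtree}

lemma dist_le_of_lipschitzWith (hd : RealizesPathMetric e) {f : ℝ → ℂ} {K : NNReal}
    (hf : LipschitzWith K f) (hmem : ∀ t ∈ Icc (0 : ℝ) 1, f t ∈ Xtree) {p q : T}
    (hp : f 0 = e p) (hq : f 1 = e q) : dist p q ≤ K := by
  have := treePathDist_le_of_lipschitzWith hf hmem hp hq
  rw [← hd, ← ENNReal.ofReal_coe_nnreal] at this
  exact (ENNReal.ofReal_le_ofReal_iff K.2).1 this

lemma dist_coe_le (hd : RealizesPathMetric e) (p q : T) : dist (e p : ℂ) (e q) ≤ dist p q := by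
  have := ofReal_dist_le_treePathDist (e p) (e q)
  rwa [← hd, ENNReal.ofReal_le_ofReal_iff dist_nonneg] at this

lemma dist_le_abs_re_sub (hd : RealizesPathMetric e) {k : ℕ} (hk : 1 ≤ k) {p q : T}
    (hp : (e p : ℂ).im = k) (hq : (e q : ℂ).im = k) (hp' : k ≤ (e p : ℂ).re)
    (hq' : k ≤ (e q : ℂ).re) : dist p q ≤ |(e p : ℂ).re - (e q : ℂ).re| := by
  refine (hd.dist_le_of_lipschitzWith (lipschitzWith_lineMap (e p : ℂ) (e q : ℂ)) (fun t ht => ?_)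
    (AffineMap.lineMap_apply_zero _ _) (AffineMap.lineMap_apply_one _ _)).trans_eq ?_
  · obtain ⟨ht0, ht1⟩ := ht
    refine mem_Xtree_of_ray hk ?_ ?_ <;> simp only [AffineMap.lineMap_apply_module,
      Complex.add_re, Complex.add_im, Complex.real_smul, Complex.mul_re, Complex.mul_im,
      Complex.ofReal_re, Complex.ofReal_im, zero_mul, sub_zero, add_zero, hp, hq]
    · ring
    · nlinarith
  · rw [coe_nndist, Complex.dist_of_im_eq (hp.trans hq.symm), Real.dist_eq]

lemma dist_le_abs_sub_of_spinePt (hd : RealizesPathMetric e) {b b' : ℝ} (hb : 0 ≤ b)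
    (hb' : 0 ≤ b') {p q : T} (hp : spinePt b = e p) (hq : spinePt b' = e q) :
    dist p q ≤ |b - b'| := by
  refine (hd.dist_le_of_lipschitzWith (lipschitzWith_spinePt.comp (lipschitzWith_lineMap b b'))
    (fun t ht => spinePt_mem_Xtree ?_) (by simpa using hp) (by simpa using hq)).trans_eq ?_
  · obtain ⟨ht0, ht1⟩ := ht
    rw [AffineMap.lineMap_apply_module]
    simp only [smul_eq_mul]
    nlinarith
  · simp [Real.dist_eq]

lemma dist_spineFoot_le (hd : RealizesPathMetric e) (p : T) :
    dist p (spineFoot e p) ≤ rayDepth (e p) := by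
  rcases spine_or_mem_rayInt (e p).2 with hsp | ⟨k, hk, hray⟩
  · have : spineFoot e p = p := by
      rw [spineFoot, Equiv.symm_apply_eq]
      exact Subtype.ext (spinePt_spineCoord (e p).2 hsp)
    rw [this, dist_self]
    exact le_max_right _ _
  · have hfoot : (e (spineFoot e p) : ℂ) = junction k := by
      rw [coe_spineFoot, spinePt_spineCoord_of_mem_rayInt hk hray]
    refine (hd.dist_le_abs_re_sub hk hray.1 (by rw [hfoot]; rfl) (by linarith [hray.2])
      (by rw [hfoot]; simp [junction])).trans_eq ?_
    rw [hfoot, rayDepth_of_mem_rayInt hray, abs_of_pos (by simp [junction]; linarith [hray.2])]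
    simp [junction]

lemma dist_le_rayDepth_add (hd : RealizesPathMetric e) (p q : T) :
    dist p q ≤ rayDepth (e p) + |spineCoord (e p) - spineCoord (e q)| + rayDepth (e q) := by
  have hfeet := hd.dist_le_abs_sub_of_spinePt (spineCoord_nonneg (e p).2)
    (spineCoord_nonneg (e q).2) (coe_spineFoot p).symm (coe_spineFoot q).symm
  calc dist p q ≤ dist p (spineFoot e p) + dist (spineFoot e p) (spineFoot e q) +
        dist (spineFoot e q) q := dist_triangle4 _ _ _ _
    _ ≤ _ := by
      gcongr
      · exact hd.dist_spineFoot_le p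
      · rw [dist_comm]; exact hd.dist_spineFoot_le q

lemma abs_rayDepth_sub_le_dist (hd : RealizesPathMetric e) {k : ℕ} {p q : T}
    (hp : (e p : ℂ) ∈ rayInt k) (hq : (e q : ℂ) ∈ rayInt k) :
    |rayDepth (e p) - rayDepth (e q)| ≤ dist p q := by
  rw [rayDepth_of_mem_rayInt hp, rayDepth_of_mem_rayInt hq, sub_sub_sub_cancel_right]
  exact (Complex.abs_re_sub_le_dist _ _).trans (hd.dist_coe_le p q)

lemma dist_le_abs_rayDepth_sub (hd : RealizesPathMetric e) {k : ℕ} (hk : 1 ≤ k) {p q : T}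
    (hp : (e p : ℂ) ∈ rayInt k) (hq : (e q : ℂ) ∈ rayInt k) :
    dist p q ≤ |rayDepth (e p) - rayDepth (e q)| := by
  rw [rayDepth_of_mem_rayInt hp, rayDepth_of_mem_rayInt hq, sub_sub_sub_cancel_right]
  exact hd.dist_le_abs_re_sub hk hp.1 hq.1 (by linarith [hp.2]) (by linarith [hq.2])

lemma rayDepth_add_le_dist (hd : RealizesPathMetric e) {k : ℕ} {p q : T}
    (hp : (e p : ℂ) ∈ rayInt k) (hq : (e q : ℂ) ∉ rayInt k) :
    rayDepth (e p) + |spineCoord (e p) - spineCoord (e q)| / 2 ≤ dist p q := by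
  have h := ofReal_dist_add_dist_le_treePathDist (exists_eq_junction_of_path hp hq)
  rw [← hd, ENNReal.ofReal_le_ofReal_iff dist_nonneg, dist_junction_of_mem_rayInt hp] at h
  have := abs_spineCoord_sub_le (junction k) (e q)
  rw [spineCoord_junction, ← spineCoord_of_mem_rayInt hp] at this
  linarith

lemma rayDepth_add_rayDepth_add_le (hd : RealizesPathMetric e) {p q : T}
    (h : ∀ k, (e p : ℂ) ∈ rayInt k → (e q : ℂ) ∉ rayInt k) :
    rayDepth (e p) + rayDepth (e q) + |spineCoord (e p) - spineCoord (e q)| ≤ 2 * dist p q := by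
  have hpq := rayDepth_nonneg (e p)
  have hqp := rayDepth_nonneg (e q)
  rcases spine_or_mem_rayInt (e p).2 with hsp | ⟨k, -, hray⟩ <;>
    rcases spine_or_mem_rayInt (e q).2 with hsq | ⟨k', -, hray'⟩
  · have := abs_spineCoord_sub_le (e p) (e q)
    have := hd.dist_coe_le p q
    rw [rayDepth_of_spine hsp, rayDepth_of_spine hsq]
    linarith
  · have := hd.rayDepth_add_le_dist hray' (not_mem_rayInt_of_spine hsp k')
    rw [rayDepth_of_spine hsp, dist_comm, abs_sub_comm]
    linarith
  · have := hd.rayDepth_add_le_dist hray (not_mem_rayInt_of_spine hsq k)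
    rw [rayDepth_of_spine hsq]
    linarith
  · have h1 := hd.rayDepth_add_le_dist hray (h k hray)
    have h2 := hd.rayDepth_add_le_dist hray' fun h' => h k' h' hray'
    rw [dist_comm, abs_sub_comm] at h2
    linarith

end RealizesPathMetric

noncomputable def treeKey (N : ℝ) (z : ℂ) : ℤ × ℤ × ℝ :=
  (⌊spineCoord z / N⌋, ⌊rayDepth z / N⌋, if ⌊rayDepth z / N⌋ = 0 then 0 else z.im)

def keyParity (κ : ℤ × ℤ × ℝ) : Fin 2 := if (κ.1 + κ.2.1) % 2 = 0 then 0 else 1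

lemma keyParity_eq_iff {κ κ' : ℤ × ℤ × ℝ} :
    keyParity κ = keyParity κ' ↔ (κ.1 + κ.2.1) % 2 = (κ'.1 + κ'.2.1) % 2 := by
  unfold keyParity
  split_ifs <;> simp <;> omega

namespace RealizesPathMetric

variable {T : Type*} [MetricSpace T] {e : T ≃ Xtree} {N : ℝ}

lemma dist_le_of_treeKey_eq (hd : RealizesPathMetric e) (hN : 0 < N) {p q : T}
    (h : treeKey N (e p) = treeKey N (e q)) : dist p q ≤ 3 * N := by
  simp only [treeKey, Prod.mk.injEq] at h
  obtain ⟨ha, hm, hk⟩ := h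
  by_cases hm0 : ⌊rayDepth (e p) / N⌋ = 0
  · have := abs_sub_lt_of_floor_div_eq hN ha
    have := lt_of_floor_div_eq_zero hN hm0
    have := lt_of_floor_div_eq_zero hN (hm ▸ hm0)
    have := hd.dist_le_rayDepth_add p q
    linarith
  · rw [if_neg hm0, if_neg (hm ▸ hm0)] at hk
    obtain ⟨k, hk1, hp⟩ := exists_mem_rayInt_of_rayDepth_pos (e p).2
      (hN.trans_le (le_of_floor_div_ne_zero hN (rayDepth_nonneg _) hm0))
    obtain ⟨k', -, hq⟩ := exists_mem_rayInt_of_rayDepth_pos (e q).2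
      (hN.trans_le (le_of_floor_div_ne_zero hN (rayDepth_nonneg _) (hm ▸ hm0)))
    obtain rfl : k = k' := by exact_mod_cast hp.1.symm.trans (hk.trans hq.1)
    have := abs_sub_lt_of_floor_div_eq hN hm
    have := hd.dist_le_abs_rayDepth_sub hk1 hp hq
    linarith

lemma lt_dist_of_treeKey_ne_of_mem_rayInt (hd : RealizesPathMetric e) (hN : 0 < N) {p q : T}
    (hne : treeKey N (e p) ≠ treeKey N (e q))
    (hpar : keyParity (treeKey N (e p)) = keyParity (treeKey N (e q))) {k : ℕ}
    (hp : (e p : ℂ) ∈ rayInt k) (hq : (e q : ℂ) ∈ rayInt k) : N < dist p q := by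
  have ha : ⌊spineCoord (e p) / N⌋ = ⌊spineCoord (e q) / N⌋ := by
    rw [spineCoord_of_mem_rayInt hp, spineCoord_of_mem_rayInt hq]
  have hm : ⌊rayDepth (e p) / N⌋ ≠ ⌊rayDepth (e q) / N⌋ := by
    intro hm
    refine hne (Prod.ext ha (Prod.ext hm ?_))
    simp only [treeKey, ← hm, hp.1, hq.1]
  rw [keyParity_eq_iff] at hpar
  simp only [treeKey] at hpar
  have := lt_abs_sub_of_floor_div hN (a := rayDepth (e p)) (b := rayDepth (e q))
    (by rw [le_abs']; omega)
  linarith [hd.abs_rayDepth_sub_le_dist hp hq]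

lemma lt_dist_of_treeKey_ne_of_forall_not_mem (hd : RealizesPathMetric e) (hN : 0 < N)
    {p q : T} (hne : treeKey N (e p) ≠ treeKey N (e q))
    (hpar : keyParity (treeKey N (e p)) = keyParity (treeKey N (e q)))
    (h : ∀ k, (e p : ℂ) ∈ rayInt k → (e q : ℂ) ∉ rayInt k) : N ≤ 2 * dist p q := by
  have := hd.rayDepth_add_rayDepth_add_le h
  have := rayDepth_nonneg (e p)
  have := rayDepth_nonneg (e q)
  have := abs_nonneg (spineCoord (e p) - spineCoord (e q))
  by_cases hm : ⌊rayDepth (e p) / N⌋ = 0 ∧ ⌊rayDepth (e q) / N⌋ = 0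
  · have ha : ⌊spineCoord (e p) / N⌋ ≠ ⌊spineCoord (e q) / N⌋ := by
      intro ha
      refine hne (Prod.ext ha (Prod.ext (hm.1.trans hm.2.symm) ?_))
      simp only [treeKey, hm.1, hm.2, if_true]
    rw [keyParity_eq_iff] at hpar
    simp only [treeKey] at hpar
    have := lt_abs_sub_of_floor_div hN (a := spineCoord (e p)) (b := spineCoord (e q))
      (by rw [le_abs']; omega)
    linarith
  · rcases not_and_or.1 hm with hm | hm
    · linarith [le_of_floor_div_ne_zero hN (rayDepth_nonneg _) hm]
    · linarith [le_of_floor_div_ne_zero hN (rayDepth_nonneg _) hm]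

theorem asdimLE_one (hd : RealizesPathMetric e) : ASDimLE T 1 := by
  refine ASDimLE.of_key fun R hR => ⟨ℤ × ℤ × ℝ, fun p => treeKey (4 * R) (e p), keyParity,
    3 * (4 * R), fun p q h => hd.dist_le_of_treeKey_eq (by positivity) h, fun p q hne hpar => ?_⟩
  by_cases hcommon : ∃ k, (e p : ℂ) ∈ rayInt k ∧ (e q : ℂ) ∈ rayInt k
  · obtain ⟨k, hp, hq⟩ := hcommon
    linarith [hd.lt_dist_of_treeKey_ne_of_mem_rayInt (by positivity) hne hpar hp hq]
  · push Not at hcommon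
    linarith [hd.lt_dist_of_treeKey_ne_of_forall_not_mem (by positivity) hne hpar hcommon]

theorem not_asdimLE_zero (hd : RealizesPathMetric e) : ¬ ASDimLE T 0 := by
  have hmem (j : ℕ) : (⟨1 + j, 1⟩ : ℂ) ∈ Xtree :=
    mem_Xtree_of_ray le_rfl (by simp) (by simp)
  let p : ℕ → T := fun j => e.symm ⟨⟨1 + j, 1⟩, hmem j⟩
  have hp (j : ℕ) : (e (p j) : ℂ) = ⟨1 + j, 1⟩ := by simp [p]
  refine not_asdimLE_zero_of_chain (p := p) (fun j => ?_) (fun C => ⟨⌈C⌉₊ + 1, ?_⟩)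
  · refine (hd.dist_le_abs_re_sub le_rfl (by simp [hp]) (by simp [hp]) (by simp [hp])
      (by simp [hp]; linarith)).trans_eq ?_
    simp [hp]
  · refine lt_of_lt_of_le ?_ ((Complex.abs_re_sub_le_dist _ _).trans (hd.dist_coe_le _ _))
    simp only [hp]
    push_cast
    rw [abs_sub_comm, abs_of_pos (by ring_nf; positivity)]
    linarith [Nat.le_ceil C]

end RealizesPathMetric

namespace Hex

inductive Dir
  | E | N | W | S
  deriving DecidableEq

instance : Fintype Hex.Dir :=
  ⟨⟨{.E, .N, .W, .S}, by decide⟩, fun d => by cases d <;> decide⟩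

namespace Dir

def vec : Dir → ℤ × ℤ
  | E => (1, 0)
  | N => (0, 1)
  | W => (-1, 0)
  | S => (0, -1)

def turnRight : Dir → Dir
  | E => S
  | S => W
  | W => N
  | N => E

def turnLeft : Dir → Dir
  | E => N
  | N => W
  | W => S
  | S => E

lemma turnLeft_turnRight (d : Dir) : d.turnRight.turnLeft = d := by cases d <;> rfl

lemma turnRight_turnLeft (d : Dir) : d.turnLeft.turnRight = d := by cases d <;> rfl

end Dir

open Dir

/-- The cell `(x, y)` is the unit square with lower left corner `(x, y)`; these are the cells to
the left and to the right of the unit edge leaving the vertex `v` in direction `d`. -/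
def leftCell (v : ℤ × ℤ) : Dir → ℤ × ℤ
  | E => (v.1, v.2)
  | N => (v.1 - 1, v.2)
  | W => (v.1 - 1, v.2 - 1)
  | S => (v.1, v.2 - 1)

def rightCell (v : ℤ × ℤ) : Dir → ℤ × ℤ
  | E => (v.1, v.2 - 1)
  | N => (v.1, v.2)
  | W => (v.1 - 1, v.2)
  | S => (v.1 - 1, v.2 - 1)

/-- The board `[0, n)²` coloured by `c`, framed by `true` columns `x = -1`, `x = n` and `false`
rows `y = -1`, `y = n`; `none` outside the frame. -/
def frameColor (c : ℤ × ℤ → Bool) (n : ℤ) (p : ℤ × ℤ) : Option Bool :=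
  if (p.2 = -1 ∨ p.2 = n) ∧ -1 ≤ p.1 ∧ p.1 ≤ n then some false
  else if (p.1 = -1 ∨ p.1 = n) ∧ 0 ≤ p.2 ∧ p.2 < n then some true
  else if 0 ≤ p.1 ∧ p.1 < n ∧ 0 ≤ p.2 ∧ p.2 < n then some (c p)
  else none

variable {c : ℤ × ℤ → Bool} {n : ℤ}

lemma frameColor_eq_some_true {p : ℤ × ℤ} (h : frameColor c n p = some true) :
    ((p.1 = -1 ∨ p.1 = n) ∧ 0 ≤ p.2 ∧ p.2 < n) ∨
      (0 ≤ p.1 ∧ p.1 < n ∧ 0 ≤ p.2 ∧ p.2 < n ∧ c p = true) := by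
  unfold frameColor at h
  split_ifs at h with h1 h2 h3
  · simp at h
  · exact .inl h2
  · exact .inr ⟨h3.1, h3.2.1, h3.2.2.1, h3.2.2.2, Option.some_injective _ h⟩

lemma frameColor_eq_some_false {p : ℤ × ℤ} (h : frameColor c n p = some false) :
    ((p.2 = -1 ∨ p.2 = n) ∧ -1 ≤ p.1 ∧ p.1 ≤ n) ∨
      (0 ≤ p.1 ∧ p.1 < n ∧ 0 ≤ p.2 ∧ p.2 < n ∧ c p = false) := by
  unfold frameColor at h
  split_ifs at h with h1 h2 h3
  · exact .inl h1
  · simp at h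
  · exact .inr ⟨h3.1, h3.2.1, h3.2.2.1, h3.2.2.2, Option.some_injective _ h⟩

lemma frameColor_eq_none_iff {p : ℤ × ℤ} :
    frameColor c n p = none ↔ p.1 < -1 ∨ n < p.1 ∨ p.2 < -1 ∨ n < p.2 := by
  unfold frameColor
  split_ifs <;> simp <;> omega

abbrev Edge := (ℤ × ℤ) × Dir

def IsInterface (c : ℤ × ℤ → Bool) (n : ℤ) (s : Edge) : Prop :=
  frameColor c n (leftCell s.1 s.2) = some true ∧ frameColor c n (rightCell s.1 s.2) = some false

/-- The next interface edge: turn right, go straight or turn left according to the colours of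
the two cells ahead; `none` when the walk leaves the frame. -/
def next (c : ℤ × ℤ → Bool) (n : ℤ) (s : Edge) : Option Edge :=
  if frameColor c n (rightCell (s.1 + s.2.vec) s.2) = some true then
    some (s.1 + s.2.vec, s.2.turnRight)
  else if frameColor c n (rightCell (s.1 + s.2.vec) s.2) = some false then
    (if frameColor c n (leftCell (s.1 + s.2.vec) s.2) = some true then some (s.1 + s.2.vec, s.2)
     else if frameColor c n (leftCell (s.1 + s.2.vec) s.2) = some false then
       some (s.1 + s.2.vec, s.2.turnLeft)
     else none)
  else none

def prev (c : ℤ × ℤ → Bool) (n : ℤ) (t : Edge) : Option Edge :=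
  if frameColor c n (rightCell (t.1 - t.2.vec) t.2) = some true then
    some (t.1 - t.2.turnLeft.vec, t.2.turnLeft)
  else if frameColor c n (rightCell (t.1 - t.2.vec) t.2) = some false then
    (if frameColor c n (leftCell (t.1 - t.2.vec) t.2) = some true then some (t.1 - t.2.vec, t.2)
     else if frameColor c n (leftCell (t.1 - t.2.vec) t.2) = some false then
       some (t.1 - t.2.turnRight.vec, t.2.turnRight)
     else none)
  else none

section CellIdentities

variable (v : ℤ × ℤ) (d : Dir)

lemma leftCell_turnRight : leftCell (v + d.vec) d.turnRight = rightCell (v + d.vec) d := by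
  cases d <;> rfl

lemma rightCell_turnLeft : rightCell (v + d.vec) d.turnLeft = leftCell (v + d.vec) d := by
  cases d <;> rfl

lemma rightCell_turnRight : rightCell (v + d.vec) d.turnRight = rightCell v d := by
  cases d <;> simp [rightCell, turnRight, vec, Prod.ext_iff] <;> omega

lemma leftCell_turnLeft : leftCell (v + d.vec) d.turnLeft = leftCell v d := by
  cases d <;> simp [leftCell, turnLeft, vec, Prod.ext_iff] <;> omega

lemma rightCell_sub_turnRight :
    rightCell (v + d.vec - d.turnRight.vec) d.turnRight = leftCell v d := by
  cases d <;> simp [leftCell, rightCell, turnRight, vec, Prod.ext_iff] <;> omega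

lemma leftCell_sub_turnLeft :
    leftCell (v + d.vec - d.turnLeft.vec) d.turnLeft = rightCell v d := by
  cases d <;> simp [leftCell, rightCell, turnLeft, vec, Prod.ext_iff] <;> omega

lemma rightCell_sub_turnLeft :
    rightCell (v + d.vec - d.turnLeft.vec) d.turnLeft = rightCell (v + d.vec) d := by
  cases d <;> simp [rightCell, turnLeft, vec]

end CellIdentities

lemma IsInterface.next {s t : Edge} (hs : IsInterface c n s) (h : next c n s = some t) :
    IsInterface c n t := by
  obtain ⟨hL, hR⟩ := hs
  unfold Hex.next at h
  split_ifs at h with h1 h2 h3 h4 <;> rw [Option.some.injEq] at h <;> subst h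
  · exact ⟨by rw [leftCell_turnRight]; exact h1, by rw [rightCell_turnRight]; exact hR⟩
  · exact ⟨h3, h2⟩
  · exact ⟨by rw [leftCell_turnLeft]; exact hL, by rw [rightCell_turnLeft]; exact h4⟩

lemma prev_next {s t : Edge} (hs : IsInterface c n s) (h : next c n s = some t) :
    prev c n t = some s := by
  obtain ⟨hL, hR⟩ := hs
  unfold Hex.next at h
  split_ifs at h with h1 h2 h3 h4 <;> rw [Option.some.injEq] at h <;> subst h <;>
    unfold prev <;> dsimp only
  · rw [rightCell_sub_turnRight, if_pos hL, turnLeft_turnRight, add_sub_cancel_right]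
  · rw [add_sub_cancel_right, if_neg (by rw [hR]; simp), if_pos hR, if_pos hL]
  · rw [rightCell_sub_turnLeft, if_neg (by rw [h2]; simp), if_pos h2, leftCell_sub_turnLeft,
      if_neg (by rw [hR]; simp), if_pos hR, turnRight_turnLeft, add_sub_cancel_right]

lemma eq_none_of_ne_some {x : Option Bool} (h1 : x ≠ some true) (h2 : x ≠ some false) :
    x = none := by
  rcases x with _ | _ | _ <;> simp_all

lemma eq_exit_of_next_eq_none {t : Edge} (ht : IsInterface c n t) (h : next c n t = none) :
    t = ((n, 0), E) ∨ t = ((0, n), W) := by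
  obtain ⟨hL, hR⟩ := ht
  have hL' := frameColor_eq_some_true hL
  have hR' := frameColor_eq_some_false hR
  unfold Hex.next at h
  obtain ⟨⟨x, y⟩, d⟩ := t
  split_ifs at h with h1 h2 h3 h4 <;> try simp at h
  · have := frameColor_eq_none_iff.1 (eq_none_of_ne_some h3 h4)
    cases d <;> simp [leftCell, rightCell, vec] at this hL' hR' ⊢ <;> omega
  · have := frameColor_eq_none_iff.1 (eq_none_of_ne_some h1 h2)
    cases d <;> simp [leftCell, rightCell, vec] at this hL' hR' ⊢ <;> omega

/-- The edge from `(-1, 0)` to `(0, 0)`, between the left column and the bottom row of the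
frame. -/
def start : Edge := ((-1, 0), E)

lemma isInterface_start (hn : 1 ≤ n) : IsInterface c n start := by
  constructor <;> simp only [start, leftCell, rightCell, frameColor] <;> split_ifs <;> simp_all <;>
    omega

lemma next_ne_start {s : Edge} (hs : IsInterface c n s) : next c n s ≠ some start := by
  intro h
  have hprev : prev c n start = none := by
    have : frameColor c n (rightCell (start.1 - start.2.vec) start.2) = none :=
      frameColor_eq_none_iff.2 (by simp [start, rightCell, vec])
    simp [prev, this]
  simp [prev_next hs h] at hprev

lemma IsInterface.bounds {s : Edge} (hs : IsInterface c n s) :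
    -1 ≤ s.1.1 ∧ s.1.1 ≤ n + 1 ∧ -1 ≤ s.1.2 ∧ s.1.2 ≤ n + 1 := by
  obtain ⟨⟨x, y⟩, d⟩ := s
  have h : ¬ frameColor c n (leftCell (x, y) d) = none := by simp [hs.1]
  rw [frameColor_eq_none_iff] at h
  cases d <;> simp only [leftCell] at h ⊢ <;> omega

def walk (c : ℤ × ℤ → Bool) (n : ℤ) : ℕ → Option Edge
  | 0 => some start
  | j + 1 => (walk c n j).bind (next c n)

lemma isInterface_of_walk_eq_some (hn : 1 ≤ n) {j : ℕ} {s : Edge} (h : walk c n j = some s) :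
    IsInterface c n s := by
  induction j generalizing s with
  | zero => exact Option.some_injective _ h ▸ isInterface_start hn
  | succ j ih =>
    obtain ⟨u, hu, hs⟩ := Option.bind_eq_some_iff.1 h
    exact (ih hu).next hs

lemma walk_injective (hn : 1 ≤ n) {i j : ℕ} {s : Edge} (hi : walk c n i = some s)
    (hj : walk c n j = some s) : i = j := by
  induction i generalizing j s with
  | zero =>
    cases j with
    | zero => rfl
    | succ j =>
      obtain ⟨u, hu, hs⟩ := Option.bind_eq_some_iff.1 hj
      cases Option.some_injective _ hi
      exact absurd hs (next_ne_start (isInterface_of_walk_eq_some hn hu))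
  | succ i ih =>
    obtain ⟨u, hu, hs⟩ := Option.bind_eq_some_iff.1 hi
    cases j with
    | zero =>
      cases Option.some_injective _ hj
      exact absurd hs (next_ne_start (isInterface_of_walk_eq_some hn hu))
    | succ j =>
      obtain ⟨u', hu', hs'⟩ := Option.bind_eq_some_iff.1 hj
      have := (prev_next (isInterface_of_walk_eq_some hn hu) hs).symm.trans
        (prev_next (isInterface_of_walk_eq_some hn hu') hs')
      cases Option.some_injective _ this
      rw [ih hu hu']

/-- The walk is injective and stays in a bounded region, so it stops. -/
lemma exists_walk_eq_some_next_eq_none (hn : 1 ≤ n) :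
    ∃ j t, walk c n j = some t ∧ next c n t = none := by
  by_contra! hcon
  have hall (j : ℕ) : ∃ t, walk c n j = some t := by
    induction j with
    | zero => exact ⟨start, rfl⟩
    | succ j ih =>
      obtain ⟨t, ht⟩ := ih
      obtain ⟨t', ht'⟩ := Option.ne_none_iff_exists'.1 (hcon j t ht)
      exact ⟨t', by simp [walk, ht, ht']⟩
  choose f hf using hall
  let box : Finset Edge := (Finset.Icc (-1) (n + 1) ×ˢ Finset.Icc (-1) (n + 1)) ×ˢ Finset.univ
  have hbox (j : ℕ) : f j ∈ box := by
    have := (isInterface_of_walk_eq_some hn (hf j)).bounds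
    simp only [box, Finset.mem_product, Finset.mem_Icc, Finset.mem_univ, and_true]
    omega
  obtain ⟨i, -, j, -, hij, heq⟩ := Finset.exists_ne_map_eq_of_card_lt_of_maps_to
    (s := Finset.range (box.card + 1)) (by simp) fun j _ => hbox j
  exact hij (walk_injective hn (hf i) (heq ▸ hf j))

lemma exists_interface_path (hn : 1 ≤ n) :
    ∃ (m : ℕ) (s : ℕ → Edge), s 0 = start ∧ (∀ j ≤ m, IsInterface c n (s j)) ∧
      (∀ j < m, next c n (s j) = some (s (j + 1))) ∧
      (s m = ((n, 0), E) ∨ s m = ((0, n), W)) := by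
  obtain ⟨m, t, hm, ht⟩ := exists_walk_eq_some_next_eq_none (c := c) hn
  let s : ℕ → Edge := fun j => (walk c n j).getD start
  have hs (j : ℕ) (hj : j ≤ m) : walk c n j = some (s j) := by
    cases hw : walk c n j with
    | some u => simp [s, hw]
    | none =>
      have (k : ℕ) : walk c n (j + k) = none := by
        induction k with
        | zero => exact hw
        | succ k ih => rw [← add_assoc, walk, ih]; rfl
      have := this (m - j)
      rw [Nat.add_sub_cancel' hj, hm] at this
      exact absurd this (Option.some_ne_none t)
  have hsm : s m = t := Option.some_injective _ ((hs m le_rfl).symm.trans hm)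
  refine ⟨m, s, rfl, fun j hj => isInterface_of_walk_eq_some hn (hs j hj), fun j hj => ?_,
    eq_exit_of_next_eq_none (hsm ▸ isInterface_of_walk_eq_some hn hm) (hsm ▸ ht)⟩
  have := hs (j + 1) hj
  rwa [walk, hs j hj.le, Option.bind_some] at this

def KingAdj (p q : ℤ × ℤ) : Prop := |q.1 - p.1| ≤ 1 ∧ |q.2 - p.2| ≤ 1

lemma kingAdj_cells_next {s t : Edge} (h : next c n s = some t) :
    KingAdj (leftCell s.1 s.2) (leftCell t.1 t.2) ∧
      KingAdj (rightCell s.1 s.2) (rightCell t.1 t.2) := by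
  obtain ⟨v, d⟩ := s
  unfold Hex.next at h
  split_ifs at h <;> rw [Option.some.injEq] at h <;> subst h <;> cases d <;>
    simp only [KingAdj, leftCell, rightCell, vec, turnRight, turnLeft, Prod.fst_add,
      Prod.snd_add, abs_le] <;> omega

lemma exists_run {u : ℕ → ℤ} {m : ℕ} (hn : 0 < n) (h0 : u 0 < 0) (hm : n ≤ u m)
    (hstep : ∀ j < m, |u (j + 1) - u j| ≤ 1) :
    ∃ a b, a ≤ b ∧ b ≤ m ∧ u a = 0 ∧ u b = n - 1 ∧ ∀ j, a ≤ j → j ≤ b → 0 ≤ u j ∧ u j < n := by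
  classical
  have hex : ∃ j, n ≤ u j := ⟨m, hm⟩
  have hb₁m : Nat.find hex ≤ m := Nat.find_min' hex hm
  have hb₁ : n ≤ u (Nat.find hex) := Nat.find_spec hex
  have hlt : ∀ j < Nat.find hex, u j < n := fun j hj => not_le.1 (Nat.find_min hex hj)
  obtain ⟨b, hb⟩ : ∃ b, Nat.find hex = b + 1 :=
    Nat.exists_eq_succ_of_ne_zero fun h => by rw [h] at hb₁; omega
  rw [hb] at hb₁m hb₁ hlt
  have hub : u b = n - 1 := by
    have := hstep b (by omega)
    have := hlt b (by omega)
    rw [abs_le] at *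
    omega
  have hrun (k : ℕ) (hk : k ≤ b) (hk0 : 0 ≤ u k) :
      ∃ a ≤ k, u a = 0 ∧ ∀ j, a ≤ j → j ≤ k → 0 ≤ u j := by
    induction k with
    | zero => omega
    | succ k ih =>
      by_cases hneg : u k < 0
      · have := hstep k (by omega)
        rw [abs_le] at this
        exact ⟨k + 1, le_rfl, by omega, fun j h1 h2 => by rwa [le_antisymm h2 h1]⟩
      · obtain ⟨a, ha, hua, hrun⟩ := ih (by omega) (by omega)
        refine ⟨a, by omega, hua, fun j h1 h2 => ?_⟩
        rcases Nat.lt_or_eq_of_le h2 with h | rfl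
        exacts [hrun j h1 (by omega), hk0]
  obtain ⟨a, hab, hua, hrun⟩ := hrun b le_rfl (by omega)
  exact ⟨a, b, hab, by omega, hua, hub, fun j h1 h2 => ⟨hrun j h1 h2, hlt j (by omega)⟩⟩

lemma exists_crossing_of_cells {q : ℕ → ℤ × ℤ} {m : ℕ} (f : ℤ × ℤ → ℤ)
    (hf : ∀ p p', KingAdj p p' → |f p' - f p| ≤ 1) (hn : 0 < n) (h0 : f (q 0) = -1)
    (hm : f (q m) = n) (hadj : ∀ j < m, KingAdj (q j) (q (j + 1))) {P : ℤ × ℤ → Prop}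
    (hP : ∀ j ≤ m, 0 ≤ f (q j) → f (q j) < n → P (q j)) :
    ∃ (M : ℕ) (p : ℕ → ℤ × ℤ), (∀ j ≤ M, P (p j)) ∧ (∀ j < M, KingAdj (p j) (p (j + 1))) ∧
      f (p 0) = 0 ∧ f (p M) = n - 1 := by
  obtain ⟨a, b, hab, hbm, ha, hb, hrun⟩ := exists_run (u := f ∘ q) hn (by simp [h0])
    (by simp [hm]) fun j hj => hf _ _ (hadj j hj)
  refine ⟨b - a, fun j => q (a + j), fun j hj => ?_, fun j hj => ?_, ha, ?_⟩
  · exact hP _ (by omega) (hrun _ (by omega) (by omega)).1 (hrun _ (by omega) (by omega)).2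
  · exact hadj _ (by omega)
  · simpa [Nat.add_sub_cancel' hab] using hb

theorem exists_monochromatic_crossing (hn : 1 ≤ n) (c : ℤ × ℤ → Bool) :
    ∃ (b : Bool) (m : ℕ) (p : ℕ → ℤ × ℤ),
      (∀ j ≤ m, (0 ≤ (p j).1 ∧ (p j).1 < n ∧ 0 ≤ (p j).2 ∧ (p j).2 < n) ∧ c (p j) = b) ∧
      (∀ j < m, KingAdj (p j) (p (j + 1))) ∧
      ((b = true ∧ (p 0).1 = 0 ∧ (p m).1 = n - 1) ∨
        (b = false ∧ (p 0).2 = 0 ∧ (p m).2 = n - 1)) := by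
  obtain ⟨m, s, hs0, hint, hnext, hE | hW⟩ := exists_interface_path (c := c) hn
  · obtain ⟨M, p, hP, hadj, h0, hM⟩ := exists_crossing_of_cells
      (n := n) (m := m) (q := fun j => leftCell (s j).1 (s j).2) Prod.fst (fun _ _ h => h.1)
      (by omega)
      (by simp [hs0, start, leftCell]) (by simp [hE, leftCell])
      (fun j hj => (kingAdj_cells_next (hnext j hj)).1)
      (P := fun p => (0 ≤ p.1 ∧ p.1 < n ∧ 0 ≤ p.2 ∧ p.2 < n) ∧ c p = true)
      fun j hj h1 h2 => by
        rcases frameColor_eq_some_true (hint j hj).1 with h | h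
        · omega
        · exact ⟨⟨h.1, h.2.1, h.2.2.1, h.2.2.2.1⟩, h.2.2.2.2⟩
    exact ⟨true, M, p, hP, hadj, .inl ⟨rfl, h0, hM⟩⟩
  · obtain ⟨M, p, hP, hadj, h0, hM⟩ := exists_crossing_of_cells
      (n := n) (m := m) (q := fun j => rightCell (s j).1 (s j).2) Prod.snd (fun _ _ h => h.2)
      (by omega)
      (by simp [hs0, start, rightCell]) (by simp [hW, rightCell])
      (fun j hj => (kingAdj_cells_next (hnext j hj)).2)
      (P := fun p => (0 ≤ p.1 ∧ p.1 < n ∧ 0 ≤ p.2 ∧ p.2 < n) ∧ c p = false)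
      fun j hj h1 h2 => by
        rcases frameColor_eq_some_false (hint j hj).2 with h | h
        · omega
        · exact ⟨⟨h.1, h.2.1, h.2.2.1, h.2.2.2.1⟩, h.2.2.2.2⟩
    exact ⟨false, M, p, hP, hadj, .inr ⟨rfl, h0, hM⟩⟩

end Hex

lemma board_mem_Xtree {n : ℕ} {p : ℤ × ℤ} (hp : 0 ≤ p.1 ∧ p.1 < n ∧ 0 ≤ p.2 ∧ p.2 < n) :
    (⟨n + p.1, 1 + p.2⟩ : ℂ) ∈ Xtree := by
  obtain ⟨k, hk⟩ := Int.eq_ofNat_of_zero_le hp.2.2.1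
  refine mem_Xtree_of_ray (k := k + 1) (by omega) (by simp [hk, add_comm]) ?_
  have : (k : ℝ) + 1 ≤ n := by exact_mod_cast (show (k : ℤ) + 1 ≤ n by omega)
  have : (0 : ℝ) ≤ p.1 := by exact_mod_cast hp.1
  push_cast
  linarith

/-- The cell `p` of the `n × n` board is placed at `(n + p.1, 1 + p.2)`, on the ray `A_(1 + p.2)`;
cells off the board are sent anywhere. -/
noncomputable def boardPoint (n : ℕ) (p : ℤ × ℤ) : Xtree :=
  if hp : 0 ≤ p.1 ∧ p.1 < n ∧ 0 ≤ p.2 ∧ p.2 < n then ⟨⟨n + p.1, 1 + p.2⟩, board_mem_Xtree hp⟩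
  else ⟨junction 1, junction_mem_Xtree le_rfl⟩

lemma coe_boardPoint {n : ℕ} {p : ℤ × ℤ} (hp : 0 ≤ p.1 ∧ p.1 < n ∧ 0 ≤ p.2 ∧ p.2 < n) :
    (boardPoint n p : ℂ) = ⟨n + p.1, 1 + p.2⟩ := by
  simp [boardPoint, hp]

lemma dist_boardPoint_le {n : ℕ} {p q : ℤ × ℤ} (hp : 0 ≤ p.1 ∧ p.1 < n ∧ 0 ≤ p.2 ∧ p.2 < n)
    (hq : 0 ≤ q.1 ∧ q.1 < n ∧ 0 ≤ q.2 ∧ q.2 < n) (hpq : Hex.KingAdj p q) :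
    dist (boardPoint n p) (boardPoint n q) ≤ 2 := by
  obtain ⟨h1, h2⟩ := hpq
  rw [Subtype.dist_eq, coe_boardPoint hp, coe_boardPoint hq]
  refine (Complex.dist_le_abs_re_add_abs_im _ _).trans ?_
  have : |p.1 - q.1| + |p.2 - q.2| ≤ 2 := by
    rw [abs_sub_comm, abs_sub_comm p.2]
    omega
  simp only [add_sub_add_left_eq_sub]
  exact_mod_cast this

lemma le_dist_boardPoint {n : ℕ} {p q : ℤ × ℤ} (hp : 0 ≤ p.1 ∧ p.1 < n ∧ 0 ≤ p.2 ∧ p.2 < n)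
    (hq : 0 ≤ q.1 ∧ q.1 < n ∧ 0 ≤ q.2 ∧ q.2 < n)
    (h : (p.1 = 0 ∧ q.1 = n - 1) ∨ (p.2 = 0 ∧ q.2 = n - 1)) :
    (n : ℝ) - 1 ≤ dist (boardPoint n p) (boardPoint n q) := by
  have hn : (1 : ℝ) ≤ n := by exact_mod_cast (show (1 : ℤ) ≤ n by omega)
  rw [Subtype.dist_eq, coe_boardPoint hp, coe_boardPoint hq]
  rcases h with ⟨h0, h1⟩ | ⟨h0, h1⟩
  · refine le_trans (le_of_eq ?_) (Complex.abs_re_sub_le_dist _ _)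
    simp only [h0, h1]
    push_cast
    rw [abs_sub_comm, abs_of_nonneg (by linarith)]
    ring
  · refine le_trans (le_of_eq ?_) (Complex.abs_im_sub_le_dist _ _)
    simp only [h0, h1]
    push_cast
    rw [abs_sub_comm, abs_of_nonneg (by linarith)]
    ring

theorem not_asdimLE_Xtree_one : ¬ ASDimLE Xtree 1 := by
  classical
  intro h
  obtain ⟨𝒰, hbdd, hsep, hcov⟩ := h 2 two_pos
  choose S hS using hbdd
  obtain ⟨n, hn⟩ := exists_nat_gt (|S 0| + |S 1| + 1)
  obtain ⟨b, M, p, hp, hadj, hcross⟩ := Hex.exists_monochromatic_crossing (n := n)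
    (by exact_mod_cast (show (1 : ℝ) ≤ n by linarith [abs_nonneg (S 0), abs_nonneg (S 1)]))
    fun p => decide (∃ U ∈ 𝒰 0, boardPoint n p ∈ U)
  obtain ⟨i, hi⟩ : ∃ i : Fin 2, ∀ j ≤ M, ∃ U ∈ 𝒰 i, boardPoint n (p j) ∈ U := by
    cases b
    · refine ⟨1, fun j hj => ?_⟩
      obtain ⟨i, U, hU, hjU⟩ := hcov (boardPoint n (p j))
      fin_cases i
      · have := (hp j hj).2
        simp only [decide_eq_false_iff_not, not_exists, not_and] at this
        exact absurd hjU (this U hU)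
      · exact ⟨U, hU, hjU⟩
    · exact ⟨0, fun j hj => by simpa using (hp j hj).2⟩
  have hnear := (hsep i).dist_le_of_chain (hS i) (p := fun j => boardPoint n (p j))
    (fun j hj => dist_boardPoint_le (hp j hj.le).1 (hp (j + 1) hj).1 (hadj j hj)) hi
  have hfar := le_dist_boardPoint (hp 0 (Nat.zero_le M)).1 (hp M le_rfl).1
    (by rcases hcross with ⟨-, h⟩ | ⟨-, h⟩ <;> [exact .inl h; exact .inr h])
  have hSi : S i ≤ |S 0| + |S 1| := by
    fin_cases i <;> simp <;> linarith [le_abs_self (S 0), le_abs_self (S 1), abs_nonneg (S 0),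
      abs_nonneg (S 1)]
  linarith

/-- The tree `X` has asymptotic dimension `1` in the path
metric `d` (realized as `T` via `e : T ≃ X`), and asymptotic dimension `2` in
the Euclidean metric `d_e`. -/
theorem tree_asdim_path_eq_one_euclidean_eq_two (T : Type*) [MetricSpace T]
    (e : T ≃ Xtree)
    (hd : ∀ p q : T, ENNReal.ofReal (dist p q) = treePathDist (e p) (e q)) :
    asdim T = 1 ∧ asdim Xtree = 2 := by
  constructor
  · simpa using asdim_eq_succ (RealizesPathMetric.asdimLE_one hd)
      (RealizesPathMetric.not_asdimLE_zero hd)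
  · rw [asdim_eq_succ (n := 1) asdimLE_Xtree_two not_asdimLE_Xtree_one]
    rfl
end

section
/- Let ~ be the equivalence relation on ℂ whose classes are {z, z̄} for Re z ≤ 0 and {z} for Re z > 0 (i.e., z is identified with its complex conjugate exactly when its real part is non-positive), and let Q be the quotient set equipped with the Hausdorff distance between equivalence classes (which makes Q a metric space). Then the quotient map ℂ → Q is coarsely open. -/
open Metric Bornology Function Set

/-- The equivalence class of `z ∈ ℂ`: `{z, z̄}` when `Re z ≤ 0`, and `{z}` when
`Re z > 0`. -/
noncomputable def conjClass (z : ℂ) : Set ℂ :=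
  if z.re ≤ 0 then {z, (starRingEnd ℂ) z} else {z}

lemma mem_conjClass_self (z : ℂ) : z ∈ conjClass z := by
  unfold conjClass; split <;> simp

lemma conjClass_finite (z : ℂ) : (conjClass z).Finite := by
  unfold conjClass; split
  · exact (Set.finite_singleton _).insert _
  · exact Set.finite_singleton _

lemma conjClass_nonempty (z : ℂ) : (conjClass z).Nonempty := ⟨z, mem_conjClass_self z⟩

lemma norm_of_mem_conjClass {w z : ℂ} (h : w ∈ conjClass z) : ‖w‖ = ‖z‖ := by
  unfold conjClass at h
  split at h
  · rcases h with h | h <;> subst h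
    · rfl
    · simp
  · rw [Set.mem_singleton_iff] at h; subst h; rfl

lemma conjClass_eq_of_mem {w z : ℂ} (h : w ∈ conjClass z) : conjClass w = conjClass z := by
  unfold conjClass at h ⊢
  split at h
  case isTrue hz =>
    rcases h with h | h
    · subst h; rfl
    · subst h
      have : ((starRingEnd ℂ) z).re ≤ 0 := by simpa using hz
      rw [if_pos this, if_pos hz]
      simp [Set.pair_comm]
  case isFalse hz =>
    rw [Set.mem_singleton_iff] at h; subst h; rfl

lemma hausdorffDist_conjClass_le (z w : ℂ) :
    hausdorffDist (conjClass z) (conjClass w) ≤ ‖z‖ + ‖w‖ := by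
  apply hausdorffDist_le_of_mem_dist (by positivity)
  · intro p hp
    refine ⟨w, mem_conjClass_self w, ?_⟩
    calc dist p w = ‖p - w‖ := dist_eq_norm _ _
      _ ≤ ‖p‖ + ‖w‖ := norm_sub_le _ _
      _ = ‖z‖ + ‖w‖ := by rw [norm_of_mem_conjClass hp]
  · intro p hp
    refine ⟨z, mem_conjClass_self z, ?_⟩
    calc dist p z = ‖p - z‖ := dist_eq_norm _ _
      _ ≤ ‖p‖ + ‖z‖ := norm_sub_le _ _
      _ = ‖z‖ + ‖w‖ := by rw [norm_of_mem_conjClass hp]; ring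

/-- The quotient map of `ℂ` by the identification `z ∼ z̄` for
`Re z ≤ 0` (the quotient `Q` carrying the Hausdorff distance between classes) is
coarsely open. -/
theorem conj_quotient_coarselyOpen (Q : Type*) [MetricSpace Q] (q : ℂ → Q)
    (hsurj : Function.Surjective q)
    (hq : ∀ z w : ℂ, q z = q w ↔ conjClass z = conjClass w)
    (hdist : ∀ z w : ℂ, dist (q z) (q w) = hausdorffDist (conjClass z) (conjClass w)) :
    ∀ (x₀ : ℂ) (y₀ : Q), CoarselyOpen q x₀ y₀ := by
  intro x₀ y₀ A hA ρ hρ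
  set κ : NNReal := 2 * ‖x₀‖₊ + nndist (q x₀) y₀ with hκ
  refine ⟨fun t => ρ (t - κ), ⟨fun s t hst => hρ.1 (tsub_le_tsub_right hst κ), ?_⟩, ?_⟩
  · exact hρ.2.comp (Filter.tendsto_atTop_atTop.2 fun b =>
      ⟨b + κ, fun t ht => le_tsub_of_add_le_right ht⟩)
  · rintro y ⟨b, ⟨a, haA, rfl⟩, hy⟩
    have key : nndist (q a) y₀ - κ ≤ nndist a x₀ := by
      rw [tsub_le_iff_right, ← NNReal.coe_le_coe]
      push_cast
      have h1 : dist (q a) (q x₀) ≤ ‖a‖ + ‖x₀‖ := by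
        rw [hdist]; exact hausdorffDist_conjClass_le a x₀
      have h2 : ‖a‖ - ‖x₀‖ ≤ dist a x₀ := by
        rw [dist_eq_norm]; exact norm_sub_norm_le a x₀
      have h3 : dist (q a) y₀ ≤ dist (q a) (q x₀) + dist (q x₀) y₀ := dist_triangle _ _ _
      have hκ' : (κ : ℝ) = 2 * ‖x₀‖ + dist (q x₀) y₀ := by
        rw [hκ]; push_cast; rfl
      linarith
    have hr : nndist y (q a) ≤ ρ (nndist a x₀) := hy.trans (hρ.1 key)
    obtain ⟨z, rfl⟩ := hsurj y
    have hfin : EMetric.hausdorffEdist (conjClass a) (conjClass z) ≠ ⊤ :=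
      hausdorffEdist_ne_top_of_nonempty_of_bounded (conjClass_nonempty a) (conjClass_nonempty z)
        (conjClass_finite a).isBounded (conjClass_finite z).isBounded
    have hinf : infDist a (conjClass z) ≤ (ρ (nndist a x₀) : ℝ) := by
      calc infDist a (conjClass z) ≤ hausdorffDist (conjClass a) (conjClass z) :=
            infDist_le_hausdorffDist_of_mem (mem_conjClass_self a) hfin
        _ = dist (q z) (q a) := by rw [hdist, hausdorffDist_comm]
        _ ≤ (ρ (nndist a x₀) : ℝ) := by
            rw [← coe_nndist]; exact_mod_cast hr
    obtain ⟨w, hwz, hw⟩ := (conjClass_finite z).isCompact.exists_infDist_eq_dist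
      (conjClass_nonempty z) a
    refine ⟨w, ⟨a, haA, ?_⟩, ((hq w z).2 (conjClass_eq_of_mem hwz)).symm ▸ rfl⟩
    rw [← NNReal.coe_le_coe, coe_nndist, dist_comm]
    rw [hw] at hinf
    exact hinf
end
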